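/- arXiv:2108.08033 — 12 statements merged into one kernel-verified Lean document; each statement's English description precedes it below -/
import Mathlib

section
/- Let $n \ge 1$ and let $\mathbf{C}$ be a chain of subsets of $[n]$ (a family of subsets pairwise comparable under inclusion) such that at least one of $\varnothing$ and $[n]$ is not a member of $\mathbf{C}$. Then the poset $\mathbf{B}_n - \mathbf{C}$, i.e. the family of all subsets of $[n]$ not in $\mathbf{C}$ ordered by inclusion, contains a copy of the Boolean lattice $\mathbf{B}_{n-1}$ as a subposet; that is, there is an injection $\phi$ from the subsets of $[n-1]$ into the subsets of $[n]$ avoiding $\mathbf{C}$ such that $X \subseteq Y$ if and only if $\phi(X) \subseteq \phi(Y)$. -/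
/-!
A finite chain of subsets of `[n]` has a least member. If `∅` is not in the chain, some point `a`
lies in its least member and hence in every member; if `[n]` is not in the chain, the same argument
applied to the complements gives a point `a` outside every member. Either way, the
subsets of `[n] \ {a}`, or those subsets with `a` added, form a copy of `B_{n-1}` that misses the
chain.
-/

open Finset

theorem IsChain.exists_forall_le_of_finite {α : Type*} [PartialOrder α] {s : Set α}
    (hs : IsChain (· ≤ ·) s) (hfin : s.Finite) (hne : s.Nonempty) : ∃ a ∈ s, ∀ b ∈ s, a ≤ b := by
  obtain ⟨a, ha⟩ := hfin.exists_minimal hne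
  refine ⟨a, ha.prop, fun b hb => ?_⟩
  rcases hs.total ha.prop hb with hab | hba
  · exact hab
  · exact ha.le_of_le hb hba

namespace Finset

variable {α β : Type*}

theorem exists_mem_forall_of_isChain [Nonempty α] {C : Set (Finset α)}
    (hC : IsChain (· ⊆ ·) C) (hfin : C.Finite) (hempty : ∅ ∉ C) : ∃ a, ∀ s ∈ C, a ∈ s := by
  rcases C.eq_empty_or_nonempty with rfl | hne
  · exact ⟨Classical.arbitrary α, by simp⟩
  obtain ⟨s₀, hs₀, hle⟩ := IsChain.exists_forall_le_of_finite hC hfin hne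
  obtain ⟨a, ha⟩ := nonempty_iff_ne_empty.2 fun h => hempty (h ▸ hs₀)
  exact ⟨a, fun s hs => hle s hs ha⟩

theorem exists_notMem_forall_of_isChain [Fintype α] [DecidableEq α] [Nonempty α]
    {C : Set (Finset α)} (hC : IsChain (· ⊆ ·) C) (huniv : univ ∉ C) :
    ∃ a, ∀ s ∈ C, a ∉ s := by
  have hcompl : IsChain (· ⊆ ·) (compl '' C) := by
    rintro _ ⟨s, hs, rfl⟩ _ ⟨t, ht, rfl⟩ hne
    exact (hC hs ht (ne_of_apply_ne _ hne)).symm.imp compl_subset_compl.2 compl_subset_compl.2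
  have hempty : ∅ ∉ compl '' C := by
    rintro ⟨s, hs, hs_compl⟩
    exact huniv (compl_eq_empty_iff s |>.1 hs_compl ▸ hs)
  obtain ⟨a, ha⟩ := exists_mem_forall_of_isChain hcompl (Set.toFinite _) hempty
  exact ⟨a, fun s hs => mem_compl.1 (ha _ ⟨s, hs, rfl⟩)⟩

def insertMapEmbedding [DecidableEq β] (f : α ↪ β) {b : β} (hb : b ∉ Set.range f) :
    Finset α ↪o Finset β :=
  OrderEmbedding.ofMapLEIff (fun s => insert b (s.map f)) fun s t => by
    have hb' (u : Finset α) : b ∉ u.map f := fun h =>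
      let ⟨x, _, hx⟩ := mem_map.1 h
      hb ⟨x, hx⟩
    exact (insert_subset_insert_iff (hb' s)).trans map_subset_map

end Finset

/-- Removing a chain (missing `∅` or `[n]`) from the Boolean lattice `B_n`
leaves a copy of `B_{n-1}`. -/
theorem chain_removal (n : ℕ) (hn : 1 ≤ n) (C : Set (Finset (Fin n)))
    (hC : IsChain (· ⊆ ·) C)
    (hend : (∅ : Finset (Fin n)) ∉ C ∨ (Finset.univ : Finset (Fin n)) ∉ C) :
    ∃ φ : Finset (Fin (n - 1)) → Finset (Fin n),
      Function.Injective φ ∧ (∀ X, φ X ∉ C) ∧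
      ∀ X Y, X ⊆ Y ↔ φ X ⊆ φ Y := by
  obtain ⟨m, rfl⟩ : ∃ m, n = m + 1 := ⟨n - 1, (Nat.succ_pred_eq_of_pos hn).symm⟩
  suffices h : ∃ φ : Finset (Fin m) ↪o Finset (Fin (m + 1)), ∀ X, φ X ∉ C from
    let ⟨φ, hφ⟩ := h
    ⟨φ, φ.injective, hφ, fun X Y => φ.le_iff_le.symm⟩
  rcases hend with hempty | huniv
  · obtain ⟨a, ha⟩ := exists_mem_forall_of_isChain hC (Set.toFinite C) hempty
    refine ⟨mapEmbedding a.succAboveEmb, fun X hX => ?_⟩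
    obtain ⟨x, -, hx⟩ := mem_map.1 (ha _ hX)
    exact a.succAbove_ne x hx
  · obtain ⟨a, ha⟩ := exists_notMem_forall_of_isChain hC huniv
    have ha_range : a ∉ Set.range a.succAboveEmb := by simp
    exact ⟨insertMapEmbedding a.succAboveEmb ha_range, fun X hX => ha _ hX (mem_insert_self a _)⟩
end

section
/- Let $n \ge 1$ and let $\mathbf{A}$ be an antichain of subsets of $[n]$ (a family of subsets pairwise incomparable under inclusion). Then the poset $\mathbf{B}_n - \mathbf{A}$, i.e. the family of all subsets of $[n]$ not in $\mathbf{A}$ ordered by inclusion, contains a copy of the Boolean lattice $\mathbf{B}_{n-1}$ as a subposet; that is, there is an injection $\phi$ from the subsets of $[n-1]$ into the subsets of $[n]$ avoiding $\mathbf{A}$ such that $X \subseteq Y$ if and only if $\phi(X) \subseteq \phi(Y)$. -/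
/-!
View `B_{n-1}` inside `B_n` as the sets avoiding the last element `a`, and add `a` to exactly
those sets that lie above some member of the antichain `A`. A set not above any member of `A` is
not in `A`; a set above `t ∈ A` becomes a proper superset of `t` once `a` is added, so it is not
in `A` either. Since the sets above members of `A` form an up-set, the map stays monotone, and
erasing `a` inverts it, so it is an order embedding.
-/

namespace Finset

variable {α : Type*} [DecidableEq α] (A : Set (Finset α)) (a : α)

open scoped Classical in
noncomputable def insertOnUpperClosure (s : Finset α) : Finset α :=
  if s ∈ upperClosure A then insert a s else s

variable {A a}

theorem erase_insertOnUpperClosure {s : Finset α} (ha : a ∉ s) :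
    (insertOnUpperClosure A a s).erase a = s := by
  unfold insertOnUpperClosure
  split_ifs
  · exact erase_insert ha
  · exact erase_eq_of_notMem ha

theorem insertOnUpperClosure_mono {s t : Finset α} (hst : s ⊆ t) :
    insertOnUpperClosure A a s ⊆ insertOnUpperClosure A a t := by
  unfold insertOnUpperClosure
  by_cases hs : s ∈ upperClosure A
  · have ht : t ∈ upperClosure A := (upperClosure A).upper hst hs
    simpa only [if_pos hs, if_pos ht] using insert_subset_insert a hst
  · rw [if_neg hs]
    split_ifs
    exacts [hst.trans (subset_insert a t), hst]

theorem insertOnUpperClosure_subset_iff {s t : Finset α} (hs : a ∉ s) (ht : a ∉ t) :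
    insertOnUpperClosure A a s ⊆ insertOnUpperClosure A a t ↔ s ⊆ t := by
  refine ⟨fun h => ?_, insertOnUpperClosure_mono⟩
  rw [← erase_insertOnUpperClosure (A := A) hs, ← erase_insertOnUpperClosure (A := A) ht]
  exact erase_subset_erase a h

theorem insertOnUpperClosure_notMem (hA : IsAntichain (· ⊆ ·) A) {s : Finset α} (ha : a ∉ s) :
    insertOnUpperClosure A a s ∉ A := by
  unfold insertOnUpperClosure
  split_ifs with hs
  · obtain ⟨t, htA, hts⟩ := mem_upperClosure.1 hs
    intro hA'
    have hne : t ≠ insert a s := fun h => ha (hts (h ▸ mem_insert_self a s))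
    exact hA htA hA' hne (hts.trans (subset_insert a s))
  · exact fun hsA => hs (subset_upperClosure hsA)

end Finset

theorem Fin.notMem_map_castLEEmb {m n : ℕ} (h : m ≤ n) (hm : m < n) (s : Finset (Fin m)) :
    (⟨m, hm⟩ : Fin n) ∉ s.map (Fin.castLEEmb h) := by
  simp only [Finset.mem_map, Fin.castLEEmb_apply, Fin.ext_iff, Fin.val_castLE, not_exists,
    not_and]
  exact fun x _ => x.isLt.ne

/-- Removing an antichain from the Boolean lattice `B_n` leaves a copy of `B_{n-1}`. -/
theorem antichain_removal (n : ℕ) (hn : 1 ≤ n) (A : Set (Finset (Fin n)))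
    (hA : IsAntichain (· ⊆ ·) A) :
    ∃ φ : Finset (Fin (n - 1)) → Finset (Fin n),
      Function.Injective φ ∧ (∀ X, φ X ∉ A) ∧
      ∀ X Y, X ⊆ Y ↔ φ X ⊆ φ Y := by
  let a : Fin n := ⟨n - 1, by omega⟩
  let e := Fin.castLEEmb (Nat.sub_le n 1)
  have ha (X : Finset (Fin (n - 1))) : a ∉ X.map e := Fin.notMem_map_castLEEmb _ _ X
  let φ (X : Finset (Fin (n - 1))) := Finset.insertOnUpperClosure A a (X.map e)
  have hφ (X Y : Finset (Fin (n - 1))) : X ⊆ Y ↔ φ X ⊆ φ Y := by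
    rw [Finset.insertOnUpperClosure_subset_iff (ha X) (ha Y), Finset.map_subset_map]
  refine ⟨φ, fun X Y hXY => ?_, fun X => Finset.insertOnUpperClosure_notMem hA (ha X), hφ⟩
  exact ((hφ X Y).2 hXY.le).antisymm ((hφ Y X).2 hXY.ge)
end

section
/- For every $k \ge 1$ and every coloring $c$ of the subsets of $[k+1]$ with $k$ colors, there exists a monochromatic copy of $\mathbf{V}_{1,1}$: three distinct subsets $X, Y, Z$ of $[k+1]$ with $X \subsetneq Y$, $X \subsetneq Z$, $Y \not\subseteq Z$, $Z \not\subseteq Y$, and $c(X)=c(Y)=c(Z)$. (Hence the Boolean Ramsey number satisfies $R_k(\mathbf{V}_{1,1}) \le k+1$.) -/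
/-!
Suppose a coloring `c : Finset α → β` has no monochromatic `V_{1,1}`. For `P ≠ univ`, the proper
sets `S ⊇ P` of color `c P` are pairwise comparable, so they form a chain with a largest member `N`;
adding to `P` any point `a ∉ N` kills the color `c P` on all proper supersets. Starting from `∅`
and repeating, each added point removes a color from those appearing on proper supersets of `P`,
so after `|β| < |α|` steps a proper set `P` remains with no color available for `P` itself.
-/

open Finset

section Coloring

variable {α β : Type*}

def HasMonoV11 (c : Finset α → β) : Prop :=
  ∃ X Y Z : Finset α, X ⊂ Y ∧ X ⊂ Z ∧ ¬Y ⊆ Z ∧ ¬Z ⊆ Y ∧ c Y = c X ∧ c Z = c X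

theorem subset_or_subset_of_not_hasMonoV11 {c : Finset α → β} (hc : ¬HasMonoV11 c)
    {P Y Z : Finset α} (hY : P ⊆ Y) (hZ : P ⊆ Z) (hcY : c Y = c P) (hcZ : c Z = c P) :
    Y ⊆ Z ∨ Z ⊆ Y := by
  rcases hY.eq_or_ssubset with rfl | hY
  · exact .inl hZ
  rcases hZ.eq_or_ssubset with rfl | hZ
  · exact .inr hY.subset
  by_contra! hYZ
  exact hc ⟨P, Y, Z, hY, hZ, hYZ.1, hYZ.2, hcY, hcZ⟩

variable [Fintype α] [DecidableEq α] [DecidableEq β]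

def colorsAbove (c : Finset α → β) (P : Finset α) : Finset β :=
  (Ico P univ).image c

variable {c : Finset α → β}

theorem colorsAbove_anti {P Q : Finset α} (h : P ⊆ Q) : colorsAbove c Q ⊆ colorsAbove c P :=
  image_subset_image fun _ hS => by
    rw [mem_Ico] at hS ⊢
    exact ⟨h.trans hS.1, hS.2⟩

theorem mem_colorsAbove_self {P : Finset α} (hP : P ≠ univ) : c P ∈ colorsAbove c P :=
  mem_image_of_mem c (mem_Ico.mpr ⟨le_rfl, ssubset_univ_iff.mpr hP⟩)

theorem exists_notMem_colorsAbove_insert (hc : ¬HasMonoV11 c) {P : Finset α} (hP : P ≠ univ) :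
    ∃ a ∉ P, c P ∉ colorsAbove c (insert a P) := by
  set G := (Ico P univ).filter (c · = c P)
  have hmemG {S : Finset α} : S ∈ G ↔ (P ⊆ S ∧ S ⊂ univ) ∧ c S = c P := by
    rw [mem_filter, mem_Ico]
  obtain ⟨N, hN⟩ := G.exists_maximal ⟨P, hmemG.mpr ⟨⟨subset_rfl, ssubset_univ_iff.mpr hP⟩, rfl⟩⟩
  obtain ⟨⟨hPN, hNuniv⟩, hcN⟩ := hmemG.mp hN.prop
  have hN_top : ∀ S ∈ G, S ⊆ N := fun S hS =>
    have hS' := hmemG.mp hS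
    (subset_or_subset_of_not_hasMonoV11 hc hS'.1.1 hPN hS'.2 hcN).elim id (hN.2 hS)
  obtain ⟨a, -, haN⟩ := exists_mem_notMem_of_card_lt_card (card_lt_card hNuniv)
  refine ⟨a, fun haP => haN (hPN haP), fun hmem => ?_⟩
  obtain ⟨S, hS, hcS⟩ := mem_image.mp hmem
  obtain ⟨haPS, hSuniv⟩ := mem_Ico.mp hS
  exact haN (hN_top S (hmemG.mpr ⟨⟨(subset_insert a P).trans haPS, hSuniv⟩, hcS⟩)
    (haPS (mem_insert_self a P)))

theorem exists_card_add_card_colorsAbove_le [Fintype β] (hc : ¬HasMonoV11 c) :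
    ∀ t < Fintype.card α, ∃ P : Finset α, #P = t ∧ t + #(colorsAbove c P) ≤ Fintype.card β
  | 0, _ => ⟨∅, card_empty, by simpa using card_le_univ _⟩
  | t + 1, ht => by
    obtain ⟨P, hPt, hle⟩ := exists_card_add_card_colorsAbove_le hc t (by omega)
    have hP : P ≠ univ := (card_lt_iff_ne_univ P).mp (by omega)
    obtain ⟨a, haP, hca⟩ := exists_notMem_colorsAbove_insert hc hP
    have hsub : colorsAbove c (insert a P) ⊆ (colorsAbove c P).erase (c P) := fun b hb =>
      mem_erase.mpr ⟨fun hb' => hca (hb' ▸ hb), colorsAbove_anti (subset_insert a P) hb⟩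
    have hcard := card_le_card hsub
    rw [card_erase_of_mem (mem_colorsAbove_self hP)] at hcard
    have hpos := card_pos.mpr ⟨_, mem_colorsAbove_self (c := c) hP⟩
    exact ⟨insert a P, by rw [card_insert_of_notMem haP, hPt], by omega⟩

theorem hasMonoV11_of_card_lt [Fintype β] (h : Fintype.card β < Fintype.card α)
    (c : Finset α → β) : HasMonoV11 c := by
  by_contra hc
  obtain ⟨P, hPt, hle⟩ := exists_card_add_card_colorsAbove_le hc _ h
  have hP : P ≠ univ := (card_lt_iff_ne_univ P).mp (by omega)
  have hpos := card_pos.mpr ⟨_, mem_colorsAbove_self (c := c) hP⟩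
  omega

end Coloring

theorem Rk_V11_upper_general (k : ℕ) (c : Finset (Fin (k + 1)) → Fin k) :
    ∃ X Y Z : Finset (Fin (k + 1)),
      X ⊂ Y ∧ X ⊂ Z ∧ ¬Y ⊆ Z ∧ ¬Z ⊆ Y ∧ c Y = c X ∧ c Z = c X :=
  hasMonoV11_of_card_lt (by simp) c

/-- Every `k`-coloring of the subsets of `[k+1]` contains a monochromatic copy of
`V_{1,1}`: three distinct sets `X ⊊ Y`, `X ⊊ Z` with `Y`, `Z` incomparable,
all of the same color.  Hence `R_k(V_{1,1}) ≤ k+1`. -/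
theorem Rk_V11_upper (k : ℕ) (hk : 1 ≤ k) (c : Finset (Fin (k + 1)) → Fin k) :
    ∃ X Y Z : Finset (Fin (k + 1)),
      X ⊂ Y ∧ X ⊂ Z ∧ ¬Y ⊆ Z ∧ ¬Z ⊆ Y ∧ c Y = c X ∧ c Z = c X :=
  Rk_V11_upper_general k c
end

section
/- For all integers $k \ge 1$ and $n \ge m \ge 1$, there exists a coloring of the subsets of $[nk]$ with $k$ colors under which there is no monochromatic copy of $\mathbf{V}_{m,n}$. (Hence the Boolean Ramsey number satisfies $R_k(\mathbf{V}_{m,n}) \ge nk+1$.) Explicitly, one may color each subset $X \ne [nk]$ with color $\lfloor |X|/n \rfloor + 1$ and color $[nk]$ with any color. -/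
/-!
Color a set `X` by its layer `|X| / n`, merging every layer from `k - 1` on. Along the chain
`X ⊂ Z₀ ⊂ ⋯ ⊂ Z_{n-1}` the cardinality grows by at least `n`, so the layer strictly grows; a
monochromatic copy therefore forces `|X| ≥ (k - 1) n` and hence `Z_{n-1} = [nk]`. But then
`Y₀ ⊆ Z_{n-1}`, contradicting incomparability.
-/

/-- A copy of `V_{m,n}` in the Boolean lattice on `Fin N`, all of whose sets receive
the color `col` under the coloring `c`: a set `X`, a strictly increasing chain
`Y : Fin m → _` above `X`, a strictly increasing chain `Z : Fin n → _` above `X`,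
with every `Y i` incomparable to every `Z j`. -/
def VCopyColored {N : ℕ} {α : Type*} (m n : ℕ) (c : Finset (Fin N) → α) (col : α) : Prop :=
  ∃ (X : Finset (Fin N)) (Y : Fin m → Finset (Fin N)) (Z : Fin n → Finset (Fin N)),
    StrictMono Y ∧ StrictMono Z ∧ (∀ i, X ⊂ Y i) ∧ (∀ j, X ⊂ Z j) ∧
    (∀ i j, ¬Y i ⊆ Z j ∧ ¬Z j ⊆ Y i) ∧
    c X = col ∧ (∀ i, c (Y i) = col) ∧ (∀ j, c (Z j) = col)

/-- A set outside `[nk]` itself has layer at most `k - 1`, so this is the paper's coloring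
`⌊|X| / n⌋ + 1` (shifted to `Fin k`), with `[nk]` given the top color. -/
def layerColoring {α : Type*} (n k : ℕ) (hk : 1 ≤ k) (X : Finset α) : Fin k :=
  ⟨min (X.card / n) (k - 1), by omega⟩

theorem Fin.add_val_lt_of_strictMono {n b : ℕ} {f : Fin n → ℕ} (hf : StrictMono f)
    (hb : ∀ i, b < f i) (i : Fin n) : b + i < f i := by
  obtain ⟨i, hi⟩ := i
  induction i with
  | zero => simpa using hb ⟨0, hi⟩
  | succ i ih =>
    have hstep : f ⟨i, by omega⟩ < f ⟨i + 1, hi⟩ := hf (Fin.mk_lt_mk.mpr (Nat.lt_succ_self i))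
    have := ih (by omega)
    simp only at this ⊢
    omega

theorem Finset.card_add_le_card_of_ssubset_chain {α : Type*} {n : ℕ} {X : Finset α}
    {Z : Fin n → Finset α} (hZ : StrictMono Z) (hXZ : ∀ j, X ⊂ Z j) (hn : 0 < n) :
    X.card + n ≤ (Z ⟨n - 1, by omega⟩).card := by
  have := Fin.add_val_lt_of_strictMono (Finset.card_strictMono.comp hZ)
    (fun j => Finset.card_lt_card (hXZ j)) ⟨n - 1, by omega⟩
  simp only [Function.comp_apply] at this
  omega

theorem mul_le_card_of_layerColoring_eq {α : Type*} {n k : ℕ} (hn : 0 < n) (hk : 1 ≤ k)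
    {X Z : Finset α} (h : layerColoring n k hk X = layerColoring n k hk Z)
    (hXZ : X.card + n ≤ Z.card) : n * k ≤ Z.card := by
  have hlayer : X.card / n + 1 ≤ Z.card / n := by
    rw [← Nat.add_div_right _ hn]
    exact Nat.div_le_div_right hXZ
  have htop : k - 1 ≤ X.card / n := by
    have := congrArg Fin.val h
    simp only [layerColoring] at this
    omega
  have hX : (k - 1) * n ≤ X.card := (Nat.le_div_iff_mul_le hn).mp htop
  calc n * k = (k - 1) * n + n := by
        obtain ⟨k, rfl⟩ := Nat.exists_eq_add_of_le' hk
        simp only [Nat.add_sub_cancel]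
        ring
    _ ≤ Z.card := by omega

/-- For `k ≥ 1` and `n ≥ m ≥ 1` there is a `k`-coloring of the subsets of `[nk]`
with no monochromatic copy of `V_{m,n}`.  Hence `R_k(V_{m,n}) ≥ nk + 1`. -/
theorem Rk_Vmn_lower (k m n : ℕ) (hk : 1 ≤ k) (hm : 1 ≤ m) (hmn : m ≤ n) :
    ∃ c : Finset (Fin (n * k)) → Fin k, ¬∃ col, VCopyColored m n c col := by
  have hn : 0 < n := by omega
  refine ⟨layerColoring n k hk, ?_⟩
  rintro ⟨col, X, Y, Z, -, hZ, -, hXZ, hinc, hcX, -, hcZ⟩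
  set top : Fin n := ⟨n - 1, by omega⟩
  have hbig : n * k ≤ (Z top).card :=
    mul_le_card_of_layerColoring_eq hn hk (hcX.trans (hcZ top).symm)
      (Finset.card_add_le_card_of_ssubset_chain hZ hXZ hn)
  have htop : Z top = Finset.univ :=
    Finset.eq_univ_of_card _ (le_antisymm (Finset.card_le_univ _) (by simpa using hbig))
  exact (hinc ⟨0, hm⟩ top).1 (htop ▸ Finset.subset_univ _)
end

section
/- For all integers $m, n \ge 1$ and every coloring of the subsets of $[m+n+1]$ with two colors $1$ and $2$, there exists either a copy of $\mathbf{V}_{m,m}$ all of whose sets have color $1$, or a copy of $\mathbf{V}_{n,n}$ all of whose sets have color $2$. (Hence $R(\mathbf{V}_{m,m},\mathbf{V}_{n,n}) \le m+n+1$.) -/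
open Finset

namespace VRamsey

section Chains

variable {α : Type*} [DecidableEq α]

theorem toFinset_take_ssubset_toFinset_take {L : List α} (hL : L.Nodup) {i j : ℕ} (hij : i < j)
    (hj : j ≤ L.length) : (L.take i).toFinset ⊂ (L.take j).toFinset := by
  have hcard : ∀ k ≤ L.length, #(L.take k).toFinset = k := fun k hk => by
    rw [List.toFinset_card_of_nodup ((List.take_sublist _ _).nodup hL), List.length_take,
      min_eq_left hk]
  refine Finset.ssubset_iff_subset_ne.2 ⟨fun x hx => ?_, fun h => ?_⟩
  · rw [List.mem_toFinset] at hx ⊢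
    exact List.take_subset_take_left _ hij.le hx
  · have := congrArg card h
    rw [hcard i (hij.le.trans hj), hcard j hj] at this
    omega

theorem exists_list_through [Fintype α] {a b b' : α} {D : Finset α} (ha : a ∈ D) (hb : b ∉ D)
    (hb' : b' ∉ D) (hbb' : b ≠ b') :
    ∃ l₁ l₂ : List α, (a :: l₁ ++ b' :: l₂).Nodup ∧ (∀ x, x ∈ a :: l₁ ++ b' :: l₂ ↔ x ≠ b) ∧
      (a :: l₁).toFinset = D := by
  refine ⟨(D.erase a).toList, (univ \ insert b (insert b' D)).toList, ?_, fun x => ?_, ?_⟩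
  · refine List.nodup_append.2 ⟨List.nodup_cons.2 ⟨by simp, nodup_toList _⟩,
      List.nodup_cons.2 ⟨by simp, nodup_toList _⟩, ?_⟩
    simp only [List.mem_cons, mem_toList, mem_erase, mem_sdiff, mem_univ, true_and, mem_insert]
    grind
  · simp only [List.mem_append, List.mem_cons, mem_toList, mem_erase, mem_sdiff, mem_univ,
      true_and, mem_insert]
    grind
  · rw [List.toFinset_cons, toList_toFinset, insert_erase ha]

theorem exists_chain_through [Fintype α] {K : ℕ} (hK : Fintype.card α = K + 1) {a b b' : α}
    {D : Finset α} (ha : a ∈ D) (hb : b ∉ D) (hb' : b' ∉ D) (hbb' : b ≠ b') :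
    ∃ C : Fin K → Finset α, StrictMono C ∧ (∀ i, a ∈ C i ∧ b ∉ C i) ∧
      (∀ i : Fin K, (i : ℕ) < #D → C i ⊆ D) ∧ (∀ i : Fin K, #D ≤ i → insert b' D ⊆ C i) := by
  obtain ⟨l₁, l₂, hnodup, hmem, hD⟩ := exists_list_through ha hb hb' hbb'
  have hlen₁ : (a :: l₁).length = #D := by
    rw [← hD, List.toFinset_card_of_nodup (hnodup.sublist (List.sublist_append_left _ _))]
  have hlen : (a :: l₁ ++ b' :: l₂).length = K := by
    have h := List.toFinset_card_of_nodup hnodup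
    rw [show (a :: l₁ ++ b' :: l₂).toFinset = univ.erase b by
        ext x; rw [List.mem_toFinset, hmem, mem_erase]; simp,
      card_erase_of_mem (mem_univ b), card_univ, hK] at h
    omega
  refine ⟨fun i => ((a :: l₁ ++ b' :: l₂).take (i + 1)).toFinset,
    fun i j hij => toFinset_take_ssubset_toFinset_take hnodup (by simpa using hij) (by omega),
    fun i => ⟨by simp, fun h => (hmem b).1 (List.take_subset _ _ (List.mem_toFinset.1 h)) rfl⟩,
    fun i hi x hx => ?_, fun i hi => ?_⟩
  · rw [List.mem_toFinset, List.take_append_of_le_length (by omega)] at hx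
    exact hD ▸ List.mem_toFinset.2 (List.take_subset _ _ hx)
  · obtain ⟨k, hk⟩ : ∃ k, (i : ℕ) + 1 - (a :: l₁).length = k + 1 := ⟨i - #D, by omega⟩
    dsimp only
    rw [← hD, List.take_append, hk, List.take_of_length_le (by omega), List.take_succ_cons]
    intro x hx
    simp only [mem_insert, List.mem_toFinset, List.mem_append, List.mem_cons] at hx ⊢
    tauto

end Chains

section Arms

variable {N : ℕ} {β : Type*}

/-- A leg of a copy of `V_{k,k}` with bottom `X`: since `u ∈ Y i` and `v ∉ Y i`, the legs for
`(u, v)` and for `(v, u)` are incomparable. -/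
def HasArm (c : Finset (Fin N) → β) (col : β) (k : ℕ) (X : Finset (Fin N)) (u v : Fin N) :
    Prop :=
  ∃ Y : Fin k → Finset (Fin N), StrictMono Y ∧ ∀ i, X ⊂ Y i ∧ u ∈ Y i ∧ v ∉ Y i ∧ c (Y i) = col

variable {c : Finset (Fin N) → β} {col : β}

theorem vCopyColored_of_hasArm {k : ℕ} {X : Finset (Fin N)} {u v : Fin N} (hX : c X = col)
    (huv : HasArm c col k X u v) (hvu : HasArm c col k X v u) : VCopyColored k k c col := by
  obtain ⟨Y, hYmono, hY⟩ := huv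
  obtain ⟨Z, hZmono, hZ⟩ := hvu
  exact ⟨X, Y, Z, hYmono, hZmono, fun i => (hY i).1, fun j => (hZ j).1,
    fun i j => ⟨fun h => (hZ j).2.2.1 (h (hY i).2.1), fun h => (hY i).2.2.1 (h (hZ j).2.1)⟩,
    hX, fun i => (hY i).2.2.2, fun j => (hZ j).2.2.2⟩

theorem hasArm_of_chain {K k : ℕ} {X : Finset (Fin N)} {u v : Fin N}
    {C : Fin K → Finset (Fin N)} (hC : StrictMono C) {T : Finset (Fin K)} (hT : k ≤ #T)
    (hCT : ∀ i ∈ T, X ⊂ C i ∧ u ∈ C i ∧ v ∉ C i ∧ c (C i) = col) : HasArm c col k X u v := by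
  obtain ⟨S, hST, hS⟩ := exists_subset_card_eq hT
  exact ⟨C ∘ S.orderEmbOfFin hS, hC.comp (S.orderEmbOfFin hS).strictMono,
    fun i => hCT _ (hST (S.orderEmbOfFin_mem hS i))⟩

theorem lt_card_filter_ne_of_not_hasArm [DecidableEq β] {p q : ℕ} {a b : Fin N}
    (hab : ¬HasArm c col p ∅ a b) {C : Fin (p + q) → Finset (Fin N)} (hC : StrictMono C)
    (hCab : ∀ i, a ∈ C i ∧ b ∉ C i) : q < #{i | c (C i) ≠ col} := by
  by_contra! hle
  refine hab (hasArm_of_chain hC (T := {i | c (C i) = col}) ?_ fun i hi =>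
    ⟨empty_ssubset.2 ⟨a, (hCab i).1⟩, (hCab i).1, (hCab i).2, (mem_filter.1 hi).2⟩)
  have := card_filter_add_card_filter_not (s := univ) fun i => c (C i) = col
  rw [card_univ, Fintype.card_fin] at this
  simp only [ne_eq] at hle
  omega

theorem exists_ne_col_of_not_hasArm [DecidableEq β] {p q : ℕ} (hN : N = p + q + 1) (hq : 1 ≤ q)
    {a b b' : Fin N} (hab : a ≠ b) (hab' : a ≠ b') (hbb' : b ≠ b')
    (h : ¬HasArm c col p ∅ a b) : ∃ E, a ∈ E ∧ b ∉ E ∧ b' ∉ E ∧ c E ≠ col := by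
  have hcard : #(univ \ {b, b'}) = p + q - 1 := by
    rw [card_sdiff_of_subset (subset_univ _), card_pair hbb', card_univ, Fintype.card_fin]
    omega
  obtain ⟨C, hC, hCab, hlow, -⟩ := exists_chain_through (K := p + q) (a := a)
    (D := univ \ {b, b'}) (by rw [Fintype.card_fin, hN]) (by simp [hab, hab']) (by simp)
    (by simp) hbb'
  have hmany := lt_card_filter_ne_of_not_hasArm h hC hCab
  obtain ⟨i, hi, hilast⟩ :=
    exists_mem_ne (s := {i | c (C i) ≠ col}) (by omega) (⟨p + q - 1, by omega⟩ : Fin (p + q))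
  have hiD : C i ⊆ univ \ {b, b'} := hlow i <| by
    rw [hcard]
    exact lt_of_le_of_ne (by omega) (by simpa [Fin.ext_iff] using hilast)
  exact ⟨C i, (hCab i).1, (hCab i).2, fun h => by simpa using hiD h, (mem_filter.1 hi).2⟩

end Arms

section TwoColors

variable {N p q : ℕ} {c : Finset (Fin N) → Fin 2} {col col' : Fin 2}

/-- By minimality every chain set strictly inside `D` has color `col`, so `D` is the only
`col'`-set of the chain that is not above `insert b' D`. -/
theorem hasArm_above_minimal (hN : N = p + q + 1) (hcc : col ≠ col') {a b b' : Fin N}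
    {D : Finset (Fin N)} (hD : Minimal (fun S => a ∈ S ∧ c S ≠ col) D) (hb : b ∉ D)
    (hb' : b' ∉ D) (hbb' : b ≠ b') (h : ¬HasArm c col p ∅ a b) : HasArm c col' q D b' b := by
  obtain ⟨C, hC, hCab, hlow, hhigh⟩ := exists_chain_through (K := p + q)
    (by rw [Fintype.card_fin, hN]) hD.prop.1 hb hb' hbb'
  set T : Finset (Fin (p + q)) := {i | c (C i) ≠ col}
  have hmany : q < #T := lt_card_filter_ne_of_not_hasArm h hC hCab
  have hD_once : #{i ∈ T | C i = D} ≤ 1 :=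
    card_le_one.2 fun i hi j hj => hC.injective ((mem_filter.1 hi).2.trans (mem_filter.1 hj).2.symm)
  refine hasArm_of_chain hC (T := {i ∈ T | C i ≠ D}) ?_ fun i hi => ?_
  · have := card_filter_add_card_filter_not (s := T) fun i => C i = D
    simp only [ne_eq] at this ⊢
    omega
  obtain ⟨hiT, hiD⟩ := mem_filter.1 hi
  have hcol := (mem_filter.1 hiT).2
  have hDi : #D ≤ i := by
    by_contra! hlt
    exact hD.not_prop_of_lt (Finset.ssubset_iff_subset_ne.2 ⟨hlow i hlt, hiD⟩) ⟨(hCab i).1, hcol⟩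
  exact ⟨(ssubset_insert hb').trans_le (hhigh i hDi), hhigh i hDi (mem_insert_self _ _),
    (hCab i).2, by omega⟩

theorem vCopyColored_of_not_hasArm_of_not_hasArm (hN : N = p + q + 1) (hq : 1 ≤ q)
    (hcc : col ≠ col') {a b b' : Fin N} (hab : a ≠ b) (hab' : a ≠ b') (hbb' : b ≠ b')
    (h : ¬HasArm c col p ∅ a b) (h' : ¬HasArm c col p ∅ a b') : VCopyColored q q c col' := by
  obtain ⟨E, haE, hbE, hb'E, hE⟩ := exists_ne_col_of_not_hasArm hN hq hab hab' hbb' h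
  obtain ⟨D, hDE, hD⟩ :=
    exists_minimal_le_of_wellFoundedLT (fun S => a ∈ S ∧ c S ≠ col) E ⟨haE, hE⟩
  have hbD : b ∉ D := fun hb => hbE (hDE hb)
  have hb'D : b' ∉ D := fun hb' => hb'E (hDE hb')
  have hDcol : c D = col' := by have := hD.prop.2; omega
  exact vCopyColored_of_hasArm hDcol (hasArm_above_minimal hN hcc hD hbD hb'D hbb' h)
    (hasArm_above_minimal hN hcc hD hb'D hbD hbb'.symm h')

end TwoColors

section Tournament

variable {α : Type*} {r : α → α → Prop}

theorem tournament_out_or (htot : ∀ a b, a ≠ b → r a b ∨ r b a)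
    (huniq : ∀ a b b', a ≠ b → a ≠ b' → b ≠ b' → r a b → r a b' → False) {a u v : α}
    (hau : a ≠ u) (hav : a ≠ v) (huv : u ≠ v) : r a u ∨ r a v := by
  by_contra! h
  have hua := (htot a u hau).resolve_left h.1
  have hva := (htot a v hav).resolve_left h.2
  rcases htot u v huv with huv' | hvu'
  · exact huniq u a v hau.symm huv hav hua huv'
  · exact huniq v a u hav.symm huv.symm hau hva hvu'

theorem tournament_in_or (htot : ∀ a b, a ≠ b → r a b ∨ r b a)
    (huniq : ∀ a b b', a ≠ b → a ≠ b' → b ≠ b' → r a b → r a b' → False) {a u v : α}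
    (hau : a ≠ u) (hav : a ≠ v) (huv : u ≠ v) : r u a ∨ r v a := by
  by_contra! h
  exact huniq a u v hau hav huv ((htot a u hau).resolve_right h.1)
    ((htot a v hav).resolve_right h.2)

theorem card_le_three_of_tournament [Fintype α] (htot : ∀ a b, a ≠ b → r a b ∨ r b a)
    (huniq : ∀ a b b', a ≠ b → a ≠ b' → b ≠ b' → r a b → r a b' → False) :
    Fintype.card α ≤ 3 := by
  by_contra! h
  obtain ⟨f⟩ := Function.Embedding.nonempty_of_card_le (α := Fin 4) (β := α) (by simpa)
  have hf : ∀ i j : Fin 4, i ≠ j → f i ≠ f j := fun i j => f.injective.ne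
  have out (j k : Fin 4) (hj : 0 ≠ j) (hk : 0 ≠ k) (hjk : j ≠ k) :
      r (f 0) (f j) ∨ r (f 0) (f k) :=
    tournament_out_or htot huniq (hf _ _ hj) (hf _ _ hk) (hf _ _ hjk)
  have two (j k : Fin 4) (hj : 0 ≠ j) (hk : 0 ≠ k) (hjk : j ≠ k) :
      ¬(r (f 0) (f j) ∧ r (f 0) (f k)) :=
    fun h => huniq _ _ _ (hf _ _ hj) (hf _ _ hk) (hf _ _ hjk) h.1 h.2
  have := out 1 2 (by decide) (by decide) (by decide)
  have := out 1 3 (by decide) (by decide) (by decide)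
  have := out 2 3 (by decide) (by decide) (by decide)
  have := two 1 2 (by decide) (by decide) (by decide)
  have := two 1 3 (by decide) (by decide) (by decide)
  have := two 2 3 (by decide) (by decide) (by decide)
  tauto

end Tournament

theorem vCopyColored_one_fin_three {c : Finset (Fin 3) → Fin 2} {col col' : Fin 2}
    (hcc : col ≠ col')
    (htot : ∀ a b, a ≠ b → ¬HasArm c col 1 ∅ a b ∨ ¬HasArm c col 1 ∅ b a)
    (huniq : ∀ a b b', a ≠ b → a ≠ b' → b ≠ b' →
      ¬HasArm c col 1 ∅ a b → ¬HasArm c col 1 ∅ a b' → False) :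
    VCopyColored 1 1 c col' := by
  have hcol' {a b : Fin 3} {S : Finset (Fin 3)} (h : ¬HasArm c col 1 ∅ a b) (ha : a ∈ S)
      (hb : b ∉ S) : c S = col' := by
    by_contra hS
    exact h ⟨fun _ => S, Subsingleton.strictMono _,
      fun _ => ⟨empty_ssubset.2 ⟨a, ha⟩, ha, hb, (by omega : c S = col)⟩⟩
  have h0 : c {0} = col' := by
    rcases tournament_out_or htot huniq (a := 0) (u := 1) (v := 2) (by decide) (by decide)
      (by decide) with h | h <;> exact hcol' h (by decide) (by decide)
  have h01 : c {0, 1} = col' := by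
    rcases tournament_in_or htot huniq (a := 2) (u := 0) (v := 1) (by decide) (by decide)
      (by decide) with h | h <;> exact hcol' h (by decide) (by decide)
  have h02 : c {0, 2} = col' := by
    rcases tournament_in_or htot huniq (a := 1) (u := 0) (v := 2) (by decide) (by decide)
      (by decide) with h | h <;> exact hcol' h (by decide) (by decide)
  exact vCopyColored_of_hasArm (u := 1) (v := 2) h0
    ⟨fun _ => {0, 1}, Subsingleton.strictMono _,
      fun _ => ⟨by decide +revert, by simp, by simp, h01⟩⟩
    ⟨fun _ => {0, 2}, Subsingleton.strictMono _,
      fun _ => ⟨by decide +revert, by simp, by simp, h02⟩⟩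

theorem vCopyColored_or_vCopyColored_of_empty {N p q : ℕ} (hN : N = p + q + 1) (hp : 1 ≤ p)
    (hq : 1 ≤ q) {col col' : Fin 2} (hcc : col ≠ col') {c : Finset (Fin N) → Fin 2}
    (hc : c ∅ = col) : VCopyColored p p c col ∨ VCopyColored q q c col' := by
  by_contra! h
  obtain ⟨hA, hB⟩ := h
  have htot (a b : Fin N) (_ : a ≠ b) : ¬HasArm c col p ∅ a b ∨ ¬HasArm c col p ∅ b a :=
    not_and_or.1 fun h => hA (vCopyColored_of_hasArm hc h.1 h.2)
  have huniq (a b b' : Fin N) (hab : a ≠ b) (hab' : a ≠ b') (hbb' : b ≠ b')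
      (h : ¬HasArm c col p ∅ a b) (h' : ¬HasArm c col p ∅ a b') : False :=
    hB (vCopyColored_of_not_hasArm_of_not_hasArm hN hq hcc hab hab' hbb' h h')
  have hN3 : N ≤ 3 := by
    simpa using card_le_three_of_tournament (r := fun a b => ¬HasArm c col p ∅ a b) htot huniq
  obtain rfl : p = 1 := by omega
  obtain rfl : q = 1 := by omega
  obtain rfl : N = 3 := hN
  exact hB (vCopyColored_one_fin_three hcc htot huniq)

end VRamsey

/-- Every `2`-coloring (colors `0` and `1`) of the subsets of `[m+n+1]` contains a
copy of `V_{m,m}` in color `0` or a copy of `V_{n,n}` in color `1`.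
Hence `R(V_{m,m}, V_{n,n}) ≤ m + n + 1`. -/
theorem R_Vmm_Vnn_upper (m n : ℕ) (hm : 1 ≤ m) (hn : 1 ≤ n)
    (c : Finset (Fin (m + n + 1)) → Fin 2) :
    VCopyColored m m c 0 ∨ VCopyColored n n c 1 := by
  rcases (by omega : c ∅ = 0 ∨ c ∅ = 1) with hc | hc
  · exact VRamsey.vCopyColored_or_vCopyColored_of_empty rfl hm hn (by decide) hc
  · exact (VRamsey.vCopyColored_or_vCopyColored_of_empty (by omega) hn hm (by decide) hc).symm
end

section
/- For every $k \ge 1$ and every coloring of the family $\mathbf{B}_{k+1} - \{[k+1]\}$ (all subsets of $[k+1]$ except $[k+1]$ itself) with $k$ colors, there exists a monochromatic copy of $\mathbf{V}_{1,1}$: three distinct subsets $X, Y, Z \ne [k+1]$ of $[k+1]$ with $X \subsetneq Y$, $X \subsetneq Z$, $Y \not\subseteq Z$, $Z \not\subseteq Y$, all receiving the same color. -/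
/-!
Induct on the number of colours, with an arbitrary ground set `U`. Let `a` be the colour of `∅`.
If two incomparable nonempty proper subsets of `U` have colour `a`, they form a `V` with `∅`.
Otherwise these sets form a chain, so some `x ∈ U` lies in none of them; then the proper subsets
of `U` containing `x` avoid colour `a`, and `T ↦ insert x T` identifies them with the proper
subsets of `U.erase x`, coloured by the remaining colours.
-/

open Finset

variable {α β : Type*}

theorem Finset.insert_ssubset_insert_iff [DecidableEq α] {x : α} {s t : Finset α}
    (hs : x ∉ s) (ht : x ∉ t) : insert x s ⊂ insert x t ↔ s ⊂ t := by
  simp only [ssubset_def, insert_subset_insert_iff hs, insert_subset_insert_iff ht]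

theorem exists_mem_forall_notMem_of_isChain {U : Finset α} (hU : U.Nonempty)
    {𝒜 : Set (Finset α)} (h𝒜 : ∀ S ∈ 𝒜, S ⊂ U) (hchain : IsChain (· ⊆ ·) 𝒜) :
    ∃ x ∈ U, ∀ S ∈ 𝒜, x ∉ S := by
  rcases 𝒜.eq_empty_or_nonempty with rfl | hne
  · obtain ⟨x, hx⟩ := hU
    exact ⟨x, hx, by simp⟩
  have hfin : 𝒜.Finite :=
    (U.powerset : Set (Finset α)).toFinite.subset fun S hS => by simpa using (h𝒜 S hS).subset
  obtain ⟨M, hM⟩ := hfin.exists_maximal hne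
  obtain ⟨x, hxU, hxM⟩ := exists_of_ssubset (h𝒜 M hM.prop)
  refine ⟨x, hxU, fun S hS hxS => hxM ?_⟩
  rcases eq_or_ne S M with rfl | hSM
  · exact hxS
  rcases hchain hS hM.prop hSM with hSM | hMS
  · exact hSM hxS
  · exact hM.2 hS hMS hxS

def IsMonochromaticV (c : Finset α → β) (X Y Z : Finset α) : Prop :=
  X ⊂ Y ∧ X ⊂ Z ∧ ¬Y ⊆ Z ∧ ¬Z ⊆ Y ∧ c Y = c X ∧ c Z = c X

theorem IsMonochromaticV.insert [DecidableEq α] {c : Finset α → β} {x : α} {X Y Z : Finset α}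
    (h : IsMonochromaticV (fun T => c (insert x T)) X Y Z) (hY : x ∉ Y) (hZ : x ∉ Z) :
    IsMonochromaticV c (insert x X) (insert x Y) (insert x Z) := by
  obtain ⟨hXY, hXZ, hYZ, hZY, hcY, hcZ⟩ := h
  have hX : x ∉ X := fun hx => hY (hXY.subset hx)
  exact ⟨(insert_ssubset_insert_iff hX hY).2 hXY, (insert_ssubset_insert_iff hX hZ).2 hXZ,
    by rwa [insert_subset_insert_iff hY], by rwa [insert_subset_insert_iff hZ], hcY, hcZ⟩

theorem exists_isMonochromaticV [DecidableEq α] [DecidableEq β] (U : Finset α) (C : Finset β)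
    (c : Finset α → β) (hc : ∀ S ⊂ U, c S ∈ C) (hcard : #C < #U) :
    ∃ X Y Z, Y ⊂ U ∧ Z ⊂ U ∧ IsMonochromaticV c X Y Z := by
  induction C using Finset.strongInduction generalizing U c with
  | H C ih =>
  have hU : U.Nonempty := card_pos.1 (by omega)
  have ha : c ∅ ∈ C := hc ∅ hU.empty_ssubset
  by_cases hchain : IsChain (· ⊆ ·) {S | S ⊂ U ∧ S.Nonempty ∧ c S = c ∅}
  · obtain ⟨x, hxU, hx⟩ := exists_mem_forall_notMem_of_isChain hU (fun S hS => hS.1) hchain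
    have hxT : ∀ T ⊂ U.erase x, x ∉ T := fun T hT h => notMem_erase x U (hT.subset h)
    have hinsert : ∀ T ⊂ U.erase x, insert x T ⊂ U := fun T hT => by
      simpa [insert_erase hxU] using
        (insert_ssubset_insert_iff (hxT T hT) (notMem_erase x U)).2 hT
    have hc' : ∀ T ⊂ U.erase x, c (insert x T) ∈ C.erase (c ∅) := fun T hT =>
      mem_erase.2 ⟨fun h => hx _ ⟨hinsert T hT, insert_nonempty x T, h⟩ (mem_insert_self x T),
        hc _ (hinsert T hT)⟩
    have hcard' : #(C.erase (c ∅)) < #(U.erase x) := by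
      rw [card_erase_of_mem ha, card_erase_of_mem hxU]
      have hC : 0 < #C := card_pos.2 ⟨_, ha⟩
      omega
    obtain ⟨X, Y, Z, hY, hZ, hV⟩ := ih _ (erase_ssubset ha) (U.erase x) _ hc' hcard'
    exact ⟨insert x X, insert x Y, insert x Z, hinsert Y hY, hinsert Z hZ,
      hV.insert (hxT Y hY) (hxT Z hZ)⟩
  · simp only [IsChain, Set.Pairwise, Set.mem_ofPred_eq, not_forall, not_or] at hchain
    obtain ⟨Y, ⟨hYU, hY, hcY⟩, Z, ⟨hZU, hZ, hcZ⟩, -, hYZ, hZY⟩ := hchain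
    exact ⟨∅, Y, Z, hYU, hZU, hY.empty_ssubset, hZ.empty_ssubset, hYZ, hZY, hcY, hcZ⟩

theorem Ramsey_B_minus_top_general (k : ℕ) (c : Finset (Fin (k + 1)) → Fin k) :
    ∃ X Y Z : Finset (Fin (k + 1)),
      X ≠ Finset.univ ∧ Y ≠ Finset.univ ∧ Z ≠ Finset.univ ∧
      X ⊂ Y ∧ X ⊂ Z ∧ ¬Y ⊆ Z ∧ ¬Z ⊆ Y ∧ c Y = c X ∧ c Z = c X := by
  obtain ⟨X, Y, Z, hY, hZ, hXY, hXZ, hV⟩ :=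
    exists_isMonochromaticV univ univ c (fun _ _ => mem_univ _) (by simp)
  exact ⟨X, Y, Z, ssubset_univ_iff.1 (hXY.trans hY), ssubset_univ_iff.1 hY,
    ssubset_univ_iff.1 hZ, hXY, hXZ, hV⟩

/-- Every `k`-coloring of `B_{k+1} - {[k+1]}` (the subsets of `[k+1]` other than
`[k+1]` itself) contains a monochromatic copy of `V_{1,1}`. -/
theorem Ramsey_B_minus_top (k : ℕ) (hk : 1 ≤ k) (c : Finset (Fin (k + 1)) → Fin k) :
    ∃ X Y Z : Finset (Fin (k + 1)),
      X ≠ Finset.univ ∧ Y ≠ Finset.univ ∧ Z ≠ Finset.univ ∧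
      X ⊂ Y ∧ X ⊂ Z ∧ ¬Y ⊆ Z ∧ ¬Z ⊆ Y ∧ c Y = c X ∧ c Z = c X :=
  Ramsey_B_minus_top_general k c
end

section
/- For every $k \ge 1$ and every subset $S \subseteq [k+1]$ with $S \ne [k+1]$, there exists a coloring of the family $\mathbf{B}_{k+1} - \{S\}$ (all subsets of $[k+1]$ except $S$) with $k$ colors under which there is no monochromatic copy of $\mathbf{V}_{1,1}$. (Together with the Ramsey property of $\mathbf{B}_{k+1}-\{[k+1]\}$, this shows $\mathbf{B}_{k+1}-\{[k+1]\}$ is the unique minimal $(\mathbf{V}_{1,1};k)$-Ramsey subposet of $\mathbf{B}_{k+1}$.) -/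
/-!
Color a set `A` by its size `#A`, lowered by one when `S ⊂ A`. Above a set `X ⊉ S`, a strict
superset of the same color is then a cover `X ∪ {y} ⊇ S`, and two such covers would force
`S ⊆ X`; above a set `X ⊃ S` the colors strictly increase. This uses one color too many: on a
ground set of size `n`, the complements `{z}ᶜ` with `z ∈ S` get color `n - 1`. Giving `{z}ᶜ`
instead the rank of `z` in `S` (distinct colors below `#S`) repairs this: a same-colored cover
`X ∪ {y} ⊇ S` of some `X ⊂ {z}ᶜ` has size at most `#S`, so it is `S` itself, which is removed.
Finally `univ`, comparable to everything, can share any color.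
-/

open Finset

namespace Finset

variable {α : Type*} [DecidableEq α] {X Y Z : Finset α}

theorem inter_eq_of_card_eq_add_one (hXY : X ⊆ Y) (hXZ : X ⊆ Z) (hY : #Y = #X + 1)
    (hYZ : ¬Y ⊆ Z) : Y ∩ Z = X := by
  have hlt : #(Y ∩ Z) < #Y := card_lt_card (inter_subset_left.ssubset_of_ne (by simpa using hYZ))
  exact (eq_of_subset_of_card_le (subset_inter hXY hXZ) (by omega)).symm

end Finset

section Rank

variable {α : Type*} [LinearOrder α] {S : Finset α}

def rankIn (S : Finset α) (z : α) : ℕ := #{w ∈ S | w < z}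

theorem rankIn_lt_card {z : α} (hz : z ∈ S) : rankIn S z < #S :=
  card_lt_card (filter_ssubset.2 ⟨z, hz, lt_irrefl z⟩)

theorem rankIn_strictMonoOn : StrictMonoOn (rankIn S) S := by
  intro a ha b _ hab
  refine card_lt_card ⟨monotone_filter_right S fun w _ hw => hw.trans hab, fun h => ?_⟩
  exact lt_irrefl a (mem_filter.1 (h (mem_filter.2 ⟨ha, hab⟩))).2

end Rank

section Coloring

variable {α : Type*} [Fintype α] [LinearOrder α] {S A X Y Z : Finset α}

def vFreeColoring (S A : Finset α) : ℕ :=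
  if S ⊂ A then #A - 1
  else if ∃ z ∈ S, A = {z}ᶜ then #{w ∈ S | ∀ u ∈ Aᶜ, w < u}
  else #A

theorem vFreeColoring_of_ssubset (h : S ⊂ A) : vFreeColoring S A = #A - 1 := if_pos h

theorem vFreeColoring_compl_singleton {z : α} (hz : z ∈ S) :
    vFreeColoring S {z}ᶜ = rankIn S z := by
  have hS : ¬S ⊂ {z}ᶜ := fun h => mem_compl.1 (h.subset hz) (mem_singleton_self z)
  simp [vFreeColoring, rankIn, hS, hz]

theorem vFreeColoring_of_not_ssubset (h₁ : ¬S ⊂ A) (h₂ : ∀ z ∈ S, A ≠ {z}ᶜ) :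
    vFreeColoring S A = #A := by
  rw [vFreeColoring, if_neg h₁, if_neg (by simpa using h₂)]

theorem vFreeColoring_lt (hS : S ≠ univ) (hA : A ≠ univ) (hAS : A ≠ S) :
    vFreeColoring S A < Fintype.card α - 1 := by
  have hScard : #S < Fintype.card α := card_lt_card (ssubset_univ_iff.2 hS)
  have hAcard : #A < Fintype.card α := card_lt_card (ssubset_univ_iff.2 hA)
  by_cases hSA : S ⊂ A
  · rw [vFreeColoring_of_ssubset hSA]
    have := card_lt_card hSA
    omega
  by_cases hE : ∃ z ∈ S, A = {z}ᶜ
  · obtain ⟨z, hz, rfl⟩ := hE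
    rw [vFreeColoring_compl_singleton hz]
    have := rankIn_lt_card hz
    omega
  push Not at hE
  obtain ⟨z, hzS, hzA⟩ := not_subset.1 fun h => hSA (h.ssubset_of_ne hAS.symm)
  have hlt : #A < #({z}ᶜ : Finset α) :=
    card_lt_card ((subset_compl_singleton.2 hzA).ssubset_of_ne (hE z hzS))
  rw [vFreeColoring_of_not_ssubset hSA hE]
  rw [card_compl, card_singleton] at hlt
  exact hlt

theorem ssubset_cases_of_vFreeColoring_eq (hS : S ≠ univ) (hX : X ≠ S) (hXY : X ⊂ Y)
    (hc : vFreeColoring S Y = vFreeColoring S X) :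
    ¬S ⊆ X ∧ (S ⊆ Y ∧ #Y = #X + 1 ∨ ∃ z ∈ S, Y = {z}ᶜ ∧ rankIn S z = #X) := by
  have hXY' := card_lt_card hXY
  have hSX : ¬S ⊆ X := by
    intro h
    have hSX := h.ssubset_of_ne hX.symm
    rw [vFreeColoring_of_ssubset hSX, vFreeColoring_of_ssubset (hSX.trans hXY)] at hc
    have := card_lt_card hSX
    omega
  have hcX : vFreeColoring S X = #X := by
    refine vFreeColoring_of_not_ssubset (fun h => hSX h.subset) ?_
    rintro z hz rfl
    have hY : Y = univ := eq_univ_of_card Y (by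
      have := card_le_univ Y
      rw [card_compl, card_singleton] at hXY'
      omega)
    have := vFreeColoring_lt hS (ssubset_univ_iff.1 (hY ▸ hXY)) hX
    rw [hY, vFreeColoring_of_ssubset (ssubset_univ_iff.2 hS), card_univ] at hc
    omega
  refine ⟨hSX, ?_⟩
  by_cases hSY : S ⊂ Y
  · rw [vFreeColoring_of_ssubset hSY, hcX] at hc
    exact .inl ⟨hSY.subset, by omega⟩
  by_cases hE : ∃ z ∈ S, Y = {z}ᶜ
  · obtain ⟨z, hz, rfl⟩ := hE
    rw [vFreeColoring_compl_singleton hz, hcX] at hc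
    exact .inr ⟨z, hz, rfl, hc⟩
  push Not at hE
  rw [vFreeColoring_of_not_ssubset hSY hE, hcX] at hc
  omega

theorem vFreeColoring_not_monochromatic_V (hS : S ≠ univ) (hX : X ≠ S) (hY : Y ≠ S)
    (hZ : Z ≠ S) (hXY : X ⊂ Y) (hXZ : X ⊂ Z) (hYZ : ¬Y ⊆ Z)
    (hcY : vFreeColoring S Y = vFreeColoring S X) (hcZ : vFreeColoring S Z = vFreeColoring S X) :
    False := by
  obtain ⟨hSX, hYcases⟩ := ssubset_cases_of_vFreeColoring_eq hS hX hXY hcY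
  obtain ⟨-, hZcases⟩ := ssubset_cases_of_vFreeColoring_eq hS hX hXZ hcZ
  have eq_of_cover_of_rankIn : ∀ W, S ⊆ W → #W = #X + 1 → ∀ z ∈ S, rankIn S z = #X → W = S :=
    fun W hSW hW z hz hr => (eq_of_subset_of_card_le hSW (by have := rankIn_lt_card hz; omega)).symm
  rcases hYcases with ⟨hSY, hYcard⟩ | ⟨y, hy, rfl, hry⟩ <;>
    rcases hZcases with ⟨hSZ, hZcard⟩ | ⟨z, hz, rfl, hrz⟩
  · exact hSX (inter_eq_of_card_eq_add_one hXY.subset hXZ.subset hYcard hYZ ▸ subset_inter hSY hSZ)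
  · exact hY (eq_of_cover_of_rankIn Y hSY hYcard z hz hrz)
  · exact hZ (eq_of_cover_of_rankIn Z hSZ hZcard y hy hry)
  · obtain rfl : y = z := rankIn_strictMonoOn.injOn hy hz (hry.trans hrz.symm)
    exact hYZ subset_rfl

end Coloring

/-- For every subset `S ≠ [k+1]` there is a `k`-coloring of `B_{k+1} - {S}` with no
monochromatic copy of `V_{1,1}`. -/
theorem minimal_V11_Ramsey (k : ℕ) (hk : 1 ≤ k) (S : Finset (Fin (k + 1)))
    (hS : S ≠ Finset.univ) :
    ∃ c : Finset (Fin (k + 1)) → Fin k,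
      ¬∃ X Y Z : Finset (Fin (k + 1)),
        X ≠ S ∧ Y ≠ S ∧ Z ≠ S ∧
        X ⊂ Y ∧ X ⊂ Z ∧ ¬Y ⊆ Z ∧ ¬Z ⊆ Y ∧ c Y = c X ∧ c Z = c X := by
  refine ⟨fun A => ⟨vFreeColoring S A % k, Nat.mod_lt _ hk⟩, ?_⟩
  rintro ⟨X, Y, Z, hX, hY, hZ, hXY, hXZ, hYZ, hZY, hcY, hcZ⟩
  have hmod : ∀ A, A ≠ univ → A ≠ S → vFreeColoring S A % k = vFreeColoring S A :=
    fun A hA hAS => Nat.mod_eq_of_lt (by simpa using vFreeColoring_lt hS hA hAS)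
  have hYu : Y ≠ univ := by rintro rfl; exact hZY (subset_univ Z)
  have hZu : Z ≠ univ := by rintro rfl; exact hYZ (subset_univ Y)
  have hXu : X ≠ univ := ssubset_univ_iff.1 (hXY.trans_subset (subset_univ Y))
  simp only [Fin.mk.injEq, hmod X hXu hX, hmod Y hYu hY, hmod Z hZu hZ] at hcY hcZ
  exact vFreeColoring_not_monochromatic_V hS hX hY hZ hXY hXZ hYZ hcY hcZ
end

section
/- Let $S_1$ and $S_2$ be two distinct nonempty proper subsets of $[4]$ such that $S_2 \ne [4] - S_1$ and it is not the case that $|S_1| = |S_2| = 2$. Then there exists a coloring of the family $\mathbf{B}_4 - \{S_1, S_2, [4]\}$ with two colors $1$ and $2$ under which there is no copy of $\mathbf{V}_{1,1}$ all of whose sets have color $1$ and no copy of $\mathbf{V}_{2,2}$ all of whose sets have color $2$. -/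
/-- A copy of `V_{m,n}` inside the family `F` of subsets of `Fin N`, all of whose
sets receive the color `col` under the coloring `c`. -/
def VCopyColoredIn {N : ℕ} {α : Type*} (m n : ℕ) (F : Set (Finset (Fin N)))
    (c : Finset (Fin N) → α) (col : α) : Prop :=
  ∃ (X : Finset (Fin N)) (Y : Fin m → Finset (Fin N)) (Z : Fin n → Finset (Fin N)),
    X ∈ F ∧ (∀ i, Y i ∈ F) ∧ (∀ j, Z j ∈ F) ∧
    StrictMono Y ∧ StrictMono Z ∧ (∀ i, X ⊂ Y i) ∧ (∀ j, X ⊂ Z j) ∧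
    (∀ i j, ¬Y i ⊆ Z j ∧ ¬Z j ⊆ Y i) ∧
    c X = col ∧ (∀ i, c (Y i) = col) ∧ (∀ j, c (Z j) = col)

/-!
Relabelling the ground set by a permutation of `[4]` maps copies of `V_{m,n}` to copies of
`V_{m,n}`, and removing `S₁` and `S₂` is symmetric in the two sets. Under these symmetries the
admissible pairs `{S₁, S₂}` fall into seven classes; for a representative of each class an
explicit coloring is given, and the absence of monochromatic copies is checked by exhaustion.
-/

open Finset

section VCopy

variable {N M : ℕ} {α : Type*} {m n : ℕ}

theorem VCopyColoredIn.of_orderEmbedding {F : Set (Finset (Fin N))} {G : Set (Finset (Fin M))}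
    {c : Finset (Fin M) → α} {col : α} (φ : Finset (Fin N) ↪o Finset (Fin M))
    (hFG : Set.MapsTo φ F G) (h : VCopyColoredIn m n F (c ∘ φ) col) :
    VCopyColoredIn m n G c col := by
  obtain ⟨X, Y, Z, hX, hY, hZ, hmY, hmZ, hXY, hXZ, hinc, cX, cY, cZ⟩ := h
  exact ⟨φ X, φ ∘ Y, φ ∘ Z, hFG hX, fun i => hFG (hY i), fun j => hFG (hZ j),
    φ.strictMono.comp hmY, φ.strictMono.comp hmZ,
    fun i => φ.lt_iff_lt.2 (hXY i), fun j => φ.lt_iff_lt.2 (hXZ j),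
    fun i j => ⟨mt φ.le_iff_le.1 (hinc i j).1, mt φ.le_iff_le.1 (hinc i j).2⟩, cX, cY, cZ⟩

variable {F : Set (Finset (Fin N))} {c : Finset (Fin N) → α} {col : α}

/- The two lemmas below unfold a copy into nested quantifiers over sets, in an order that lets
`decide` prune early on colors. -/
theorem VCopyColoredIn.exists_of_one_one (h : VCopyColoredIn 1 1 F c col) :
    ∃ X, (c X = col ∧ X ∈ F) ∧ ∃ Y, (c Y = col ∧ Y ∈ F ∧ X ⊂ Y) ∧
      ∃ Z, c Z = col ∧ Z ∈ F ∧ X ⊂ Z ∧ ¬Y ⊆ Z ∧ ¬Z ⊆ Y := by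
  obtain ⟨X, Y, Z, hX, hY, hZ, -, -, hXY, hXZ, hinc, cX, cY, cZ⟩ := h
  exact ⟨X, ⟨cX, hX⟩, Y 0, ⟨cY 0, hY 0, hXY 0⟩,
    Z 0, cZ 0, hZ 0, hXZ 0, (hinc 0 0).1, (hinc 0 0).2⟩

theorem VCopyColoredIn.exists_of_two_two (h : VCopyColoredIn 2 2 F c col) :
    ∃ X, (c X = col ∧ X ∈ F) ∧ ∃ Y₁, (c Y₁ = col ∧ Y₁ ∈ F ∧ X ⊂ Y₁) ∧
      ∃ Z₁, (c Z₁ = col ∧ Z₁ ∈ F ∧ X ⊂ Z₁ ∧ ¬Y₁ ⊆ Z₁ ∧ ¬Z₁ ⊆ Y₁) ∧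
      ∃ Y₂, (c Y₂ = col ∧ Y₂ ∈ F ∧ Y₁ ⊂ Y₂ ∧ ¬Y₂ ⊆ Z₁ ∧ ¬Z₁ ⊆ Y₂) ∧
      ∃ Z₂, c Z₂ = col ∧ Z₂ ∈ F ∧ Z₁ ⊂ Z₂ ∧ ¬Y₁ ⊆ Z₂ ∧ ¬Z₂ ⊆ Y₁ ∧ ¬Y₂ ⊆ Z₂ ∧ ¬Z₂ ⊆ Y₂ := by
  obtain ⟨X, Y, Z, hX, hY, hZ, hmY, hmZ, hXY, hXZ, hinc, cX, cY, cZ⟩ := h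
  exact ⟨X, ⟨cX, hX⟩, Y 0, ⟨cY 0, hY 0, hXY 0⟩,
    Z 0, ⟨cZ 0, hZ 0, hXZ 0, (hinc 0 0).1, (hinc 0 0).2⟩,
    Y 1, ⟨cY 1, hY 1, hmY Fin.zero_lt_one, (hinc 1 0).1, (hinc 1 0).2⟩,
    Z 1, cZ 1, hZ 1, hmZ Fin.zero_lt_one, (hinc 0 1).1, (hinc 0 1).2, (hinc 1 1).1, (hinc 1 1).2⟩

end VCopy

def IsNonRamseyV {N : ℕ} (F : Set (Finset (Fin N))) : Prop :=
  ∃ c : Finset (Fin N) → Fin 2, ¬VCopyColoredIn 1 1 F c 0 ∧ ¬VCopyColoredIn 2 2 F c 1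

theorem IsNonRamseyV.of_orderEmbedding {N M : ℕ} {F : Set (Finset (Fin N))}
    {G : Set (Finset (Fin M))} (φ : Finset (Fin N) ↪o Finset (Fin M)) (hFG : Set.MapsTo φ F G)
    (h : IsNonRamseyV G) : IsNonRamseyV F := by
  obtain ⟨c, h₀, h₁⟩ := h
  exact ⟨c ∘ φ, mt (VCopyColoredIn.of_orderEmbedding φ hFG) h₀,
    mt (VCopyColoredIn.of_orderEmbedding φ hFG) h₁⟩

abbrev punctured {N : ℕ} (S₁ S₂ : Finset (Fin N)) : Set (Finset (Fin N)) :=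
  {X | X ≠ S₁ ∧ X ≠ S₂ ∧ X ≠ univ}

theorem punctured_comm {N : ℕ} (S₁ S₂ : Finset (Fin N)) : punctured S₁ S₂ = punctured S₂ S₁ :=
  Set.ext fun _ => and_left_comm

theorem mapsTo_punctured {N : ℕ} (σ : Equiv.Perm (Fin N)) (S₁ S₂ : Finset (Fin N)) :
    Set.MapsTo (mapEmbedding σ.toEmbedding) (punctured S₁ S₂)
      (punctured (S₁.map σ.toEmbedding) (S₂.map σ.toEmbedding)) := by
  rintro X ⟨h₁, h₂, hu⟩
  have hinj := map_injective σ.toEmbedding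
  refine ⟨hinj.ne h₁, hinj.ne h₂, fun h => hu (hinj ?_)⟩
  rwa [map_univ_equiv]

set_option synthInstance.maxSize 300

def colorClass {N : ℕ} (R : Finset (Finset (Fin N))) (X : Finset (Fin N)) : Fin 2 :=
  if X ∈ R then 1 else 0

theorem isNonRamseyV_punctured_0_1 :
    IsNonRamseyV (punctured ({0} : Finset (Fin 4)) {1}) :=
  ⟨colorClass {{2}, {0, 1}, {0, 2}, {0, 3}, {1, 2}, {1, 3}, {0, 1, 2}, {0, 1, 3}, {0, 2, 3}},
    fun h => absurd h.exists_of_one_one (by decide),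
    fun h => absurd h.exists_of_two_two (by decide)⟩

theorem isNonRamseyV_punctured_0_12 :
    IsNonRamseyV (punctured ({0} : Finset (Fin 4)) {1, 2}) :=
  ⟨colorClass {{1}, {2}, {0, 1}, {0, 2}, {0, 3}, {1, 3}, {0, 1, 2}, {0, 1, 3}, {0, 2, 3}},
    fun h => absurd h.exists_of_one_one (by decide),
    fun h => absurd h.exists_of_two_two (by decide)⟩

theorem isNonRamseyV_punctured_0_01 :
    IsNonRamseyV (punctured ({0} : Finset (Fin 4)) {0, 1}) :=
  ⟨colorClass {∅, {1}, {2}, {3}, {0, 2, 3}, {1, 2, 3}},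
    fun h => absurd h.exists_of_one_one (by decide),
    fun h => absurd h.exists_of_two_two (by decide)⟩

theorem isNonRamseyV_punctured_0_012 :
    IsNonRamseyV (punctured ({0} : Finset (Fin 4)) {0, 1, 2}) :=
  ⟨colorClass {{1}, {2}, {0, 1}, {0, 2}, {0, 3}, {1, 2}, {1, 3}, {0, 1, 3}, {0, 2, 3}},
    fun h => absurd h.exists_of_one_one (by decide),
    fun h => absurd h.exists_of_two_two (by decide)⟩

theorem isNonRamseyV_punctured_01_023 :
    IsNonRamseyV (punctured ({0, 1} : Finset (Fin 4)) {0, 2, 3}) :=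
  ⟨colorClass {∅, {0}, {1}, {2}, {3}, {1, 2, 3}},
    fun h => absurd h.exists_of_one_one (by decide),
    fun h => absurd h.exists_of_two_two (by decide)⟩

theorem isNonRamseyV_punctured_01_012 :
    IsNonRamseyV (punctured ({0, 1} : Finset (Fin 4)) {0, 1, 2}) :=
  ⟨colorClass {∅, {3}, {0, 2}, {1, 2}, {0, 1, 3}, {0, 2, 3}},
    fun h => absurd h.exists_of_one_one (by decide),
    fun h => absurd h.exists_of_two_two (by decide)⟩

theorem isNonRamseyV_punctured_012_013 :
    IsNonRamseyV (punctured ({0, 1, 2} : Finset (Fin 4)) {0, 1, 3}) :=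
  ⟨colorClass {∅, {0}, {1}, {2}, {3}, {2, 3}},
    fun h => absurd h.exists_of_one_one (by decide),
    fun h => absurd h.exists_of_two_two (by decide)⟩

/-- One representative of each orbit of admissible pairs under relabelling and swapping. -/
def admissibleRepresentatives : Finset (Finset (Fin 4) × Finset (Fin 4)) :=
  {({0}, {1}), ({0}, {1, 2}), ({0}, {0, 1}), ({0}, {0, 1, 2}), ({0, 1}, {0, 2, 3}),
    ({0, 1}, {0, 1, 2}), ({0, 1, 2}, {0, 1, 3})}

theorem isNonRamseyV_punctured_of_mem_admissibleRepresentatives {S₁ S₂ : Finset (Fin 4)}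
    (h : (S₁, S₂) ∈ admissibleRepresentatives) : IsNonRamseyV (punctured S₁ S₂) := by
  simp only [admissibleRepresentatives, mem_insert, mem_singleton, Prod.mk.injEq] at h
  rcases h with ⟨rfl, rfl⟩ | ⟨rfl, rfl⟩ | ⟨rfl, rfl⟩ | ⟨rfl, rfl⟩ | ⟨rfl, rfl⟩ | ⟨rfl, rfl⟩ |
    ⟨rfl, rfl⟩
  exacts [isNonRamseyV_punctured_0_1, isNonRamseyV_punctured_0_12,
    isNonRamseyV_punctured_0_01, isNonRamseyV_punctured_0_012, isNonRamseyV_punctured_01_023,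
    isNonRamseyV_punctured_01_012, isNonRamseyV_punctured_012_013]

theorem exists_perm_mem_admissibleRepresentatives (S₁ S₂ : Finset (Fin 4)) (h12 : S₁ ≠ S₂)
    (h1 : S₁.Nonempty) (h2 : S₂.Nonempty) (h1' : S₁ ≠ univ) (h2' : S₂ ≠ univ)
    (hcompl : S₂ ≠ S₁ᶜ) (hcard : ¬(S₁.card = 2 ∧ S₂.card = 2)) :
    ∃ σ : Equiv.Perm (Fin 4),
      (S₁.map σ.toEmbedding, S₂.map σ.toEmbedding) ∈ admissibleRepresentatives ∨
      (S₂.map σ.toEmbedding, S₁.map σ.toEmbedding) ∈ admissibleRepresentatives := by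
  revert S₁ S₂
  decide

/-- For distinct nonempty proper `S₁, S₂ ⊆ [4]` with `S₂ ≠ S₁ᶜ` and not both of
`2` elements, there is a `2`-coloring of `B₄ - {S₁, S₂, [4]}` with no copy of
`V_{1,1}` in color `0` and no copy of `V_{2,2}` in color `1`. -/
theorem nonRamsey_B4 (S₁ S₂ : Finset (Fin 4)) (h12 : S₁ ≠ S₂)
    (h1 : S₁.Nonempty) (h2 : S₂.Nonempty)
    (h1' : S₁ ≠ Finset.univ) (h2' : S₂ ≠ Finset.univ)
    (hcompl : S₂ ≠ S₁ᶜ) (hcard : ¬(S₁.card = 2 ∧ S₂.card = 2)) :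
    ∃ c : Finset (Fin 4) → Fin 2,
      ¬VCopyColoredIn 1 1 {X | X ≠ S₁ ∧ X ≠ S₂ ∧ X ≠ Finset.univ} c 0 ∧
      ¬VCopyColoredIn 2 2 {X | X ≠ S₁ ∧ X ≠ S₂ ∧ X ≠ Finset.univ} c 1 := by
  obtain ⟨σ, hσ⟩ :=
    exists_perm_mem_admissibleRepresentatives S₁ S₂ h12 h1 h2 h1' h2' hcompl hcard
  have hrelabelled : IsNonRamseyV (punctured (S₁.map σ.toEmbedding) (S₂.map σ.toEmbedding)) := by
    rcases hσ with hσ | hσ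
    · exact isNonRamseyV_punctured_of_mem_admissibleRepresentatives hσ
    · rw [punctured_comm]
      exact isNonRamseyV_punctured_of_mem_admissibleRepresentatives hσ
  exact hrelabelled.of_orderEmbedding _ (mapsTo_punctured σ S₁ S₂)
end

section
/- Let $S_1$, $S_2$, $S_3$ be three pairwise distinct $2$-element subsets of $[4]$. Then there exists a coloring of the family $\mathbf{B}_4 - \{S_1, S_2, S_3, [4]\}$ with two colors $1$ and $2$ under which there is no copy of $\mathbf{V}_{1,1}$ all of whose sets have color $1$ and no copy of $\mathbf{V}_{2,2}$ all of whose sets have color $2$. (This establishes the minimality of the posets $\mathbf{B}_4 - \{S_1,S_2,[4]\}$ with $|S_1|=|S_2|=2$ as $(\mathbf{V}_{1,1},\mathbf{V}_{2,2})$-Ramsey posets.) -/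
open Finset

section VCopy

variable {N : ℕ} {α : Type*} {F : Set (Finset (Fin N))} {c : Finset (Fin N) → α} {col : α}

theorem not_vCopyColoredIn_one_one_of_isChain
    (h : ∀ X ∈ F, c X = col → IsChain (· ⊆ ·) {Y ∈ F | c Y = col ∧ X ⊂ Y}) :
    ¬VCopyColoredIn 1 1 F c col := by
  rintro ⟨X, Y, Z, hX, hY, hZ, -, -, hXY, hXZ, hYZ, hcX, hcY, hcZ⟩
  rcases h X hX hcX ⟨hY 0, hcY 0, hXY 0⟩ ⟨hZ 0, hcZ 0, hXZ 0⟩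
    (fun h => (hYZ 0 0).1 h.subset) with h | h
  exacts [(hYZ 0 0).1 h, (hYZ 0 0).2 h]

theorem not_vCopyColoredIn_two_two_of_subsingleton
    (h : {A | c A = col ∧ 2 ≤ #A}.Subsingleton) :
    ¬VCopyColoredIn 2 2 F c col := by
  rintro ⟨X, Y, Z, -, -, -, hYmono, hZmono, hXY, hXZ, hYZ, -, hcY, hcZ⟩
  have two_le : ∀ W : Fin 2 → Finset (Fin N), StrictMono W → (∀ i, X ⊂ W i) → 2 ≤ #(W 1) := by
    intro W hW hXW
    have := card_lt_card (hXW 0)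
    have := card_lt_card (hW (show (0 : Fin 2) < 1 by decide))
    omega
  exact (hYZ 1 1).1 (h ⟨hcY 1, two_le Y hYmono hXY⟩ ⟨hcZ 1, two_le Z hZmono hXZ⟩).subset

theorem not_vCopyColoredIn_two_two_of_isChain
    (h : IsChain (· ⊆ ·) {A | c A = col ∧ A.Nonempty ∧ ∃ A' ∈ F, A ⊂ A'}) :
    ¬VCopyColoredIn 2 2 F c col := by
  rintro ⟨X, Y, Z, -, hY, hZ, hYmono, hZmono, hXY, hXZ, hYZ, -, hcY, hcZ⟩
  have h01 : (0 : Fin 2) < 1 := by decide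
  have nonempty_of_lt : ∀ W, X ⊂ W → W.Nonempty := fun W hXW =>
    empty_ssubset.1 ((empty_subset X).trans_ssubset hXW)
  rcases h ⟨hcY 0, nonempty_of_lt _ (hXY 0), _, hY 1, hYmono h01⟩
    ⟨hcZ 0, nonempty_of_lt _ (hXZ 0), _, hZ 1, hZmono h01⟩
    (fun h => (hYZ 0 0).1 h.subset) with h | h
  exacts [(hYZ 0 0).1 h, (hYZ 0 0).2 h]

end VCopy

section Colorings

variable {N : ℕ}

def twoColoring (p : Finset (Fin N) → Prop) [DecidablePred p] (X : Finset (Fin N)) : Fin 2 :=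
  if p X then 0 else 1

theorem twoColoring_eq_zero {p : Finset (Fin N) → Prop} [DecidablePred p] {X : Finset (Fin N)} :
    twoColoring p X = 0 ↔ p X := by
  unfold twoColoring; split_ifs with h <;> simp [h]

theorem twoColoring_eq_one {p : Finset (Fin N) → Prop} [DecidablePred p] {X : Finset (Fin N)} :
    twoColoring p X = 1 ↔ ¬p X := by
  unfold twoColoring; split_ifs with h <;> simp [h]

def facetColoring (v : Fin N) : Finset (Fin N) → Fin 2 :=
  twoColoring fun X => 2 ≤ #X ∧ X ≠ univ.erase v

def flagColoring (s : Fin N) (T : Finset (Fin N)) : Finset (Fin N) → Fin 2 :=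
  twoColoring fun X => 0 < #X ∧ #X ≤ 2 ∧ X ≠ {s} ∧ X ≠ T

theorem not_vCopyColoredIn_two_two_facetColoring (F : Set (Finset (Fin N))) (v : Fin N) :
    ¬VCopyColoredIn 2 2 F (facetColoring v) 1 := by
  refine not_vCopyColoredIn_two_two_of_subsingleton fun A ⟨hA, hA2⟩ B ⟨hB, hB2⟩ => ?_
  simp only [facetColoring, twoColoring_eq_one, not_and, not_not] at hA hB
  exact (hA hA2).trans (hB hB2).symm

theorem not_vCopyColoredIn_one_one_flagColoring {F : Set (Finset (Fin N))} {s : Fin N}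
    {T : Finset (Fin N)} (hF : ({U ∈ F | #U = 2} \ {T}).Pairwise fun U V => U ∩ V ⊆ {s}) :
    ¬VCopyColoredIn 1 1 F (flagColoring s T) 0 := by
  refine not_vCopyColoredIn_one_one_of_isChain
    fun X _ hcX Y ⟨hY, hcY, hXY⟩ Z ⟨hZ, hcZ, hXZ⟩ hYZ => ?_
  simp only [flagColoring, twoColoring_eq_zero] at hcX hcY hcZ
  have := card_lt_card hXY
  have := card_lt_card hXZ
  have hXs : X ⊆ {s} := (subset_inter hXY.subset hXZ.subset).trans <|
    hF ⟨⟨hY, by omega⟩, hcY.2.2.2⟩ ⟨⟨hZ, by omega⟩, hcZ.2.2.2⟩ hYZ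
  exact absurd (eq_of_subset_of_card_le hXs (by rw [card_singleton]; omega)) hcX.2.2.1

theorem not_vCopyColoredIn_one_one_facetColoring {F : Set (Finset (Fin 4))} {v : Fin 4}
    (hF : univ ∉ F) (hv : ∀ X ∈ F, #X = 2 → v ∉ X) :
    ¬VCopyColoredIn 1 1 F (facetColoring v) 0 := by
  refine not_vCopyColoredIn_one_one_of_isChain fun X hX hcX Y hY Z hZ hYZ => ?_
  have eq_insert : ∀ W ∈ F, facetColoring v W = 0 → X ⊂ W → W = insert v X := by
    intro W hW hcW hXW
    simp only [facetColoring, twoColoring_eq_zero] at hcX hcW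
    have hW4 : #W < 4 := by simpa using (card_lt_iff_ne_univ W).2 (ne_of_mem_of_not_mem hW hF)
    have := card_lt_card hXW
    have hX2 : #X = 2 := by omega
    have hvW : v ∈ W := by
      by_contra hvW
      refine hcW.2 (eq_of_subset_of_card_le (fun x hx => ?_) (by simp; omega))
      exact mem_erase.2 ⟨ne_of_mem_of_not_mem hx hvW, mem_univ x⟩
    refine (eq_of_subset_of_card_le (insert_subset hvW hXW.subset) ?_).symm
    rw [card_insert_of_notMem (hv X hX hX2)]
    omega
  exact absurd ((eq_insert Y hY.1 hY.2.1 hY.2.2).trans (eq_insert Z hZ.1 hZ.2.1 hZ.2.2).symm) hYZ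

theorem not_vCopyColoredIn_two_two_flagColoring {F : Set (Finset (Fin 4))} {s : Fin 4}
    {T : Finset (Fin 4)} (hF : univ ∉ F) (hsT : s ∈ T) :
    ¬VCopyColoredIn 2 2 F (flagColoring s T) 1 := by
  have flag_of_ssubset : ∀ W W', W' ∈ F → flagColoring s T W = 1 → W.Nonempty → W ⊂ W' →
      W = {s} ∨ W = T := by
    intro W W' hW' hcW hW hWW'
    simp only [flagColoring, twoColoring_eq_one] at hcW
    have : #W' < 4 := by simpa using (card_lt_iff_ne_univ W').2 (ne_of_mem_of_not_mem hW' hF)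
    have := card_lt_card hWW'
    have := hW.card_pos
    by_contra hne
    exact hcW ⟨by omega, by omega, not_or.1 hne⟩
  refine not_vCopyColoredIn_two_two_of_isChain ?_
  rintro A ⟨hcA, hA, A', hA', hAA'⟩ B ⟨hcB, hB, B', hB', hBB'⟩ -
  have hsT' : {s} ⊆ T := singleton_subset_iff.2 hsT
  rcases flag_of_ssubset A A' hA' hcA hA hAA' with rfl | rfl <;>
    rcases flag_of_ssubset B B' hB' hcB hB hBB' with rfl | rfl <;> simp [hsT']

end Colorings

section TwoSets

variable {α : Type*} [DecidableEq α]

theorem inter_subset_singleton_of_card_eq_two {U V : Finset α} {a : α} (hU : #U = 2)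
    (hV : #V = 2) (haU : a ∈ U) (haV : a ∈ V) (hUV : U ≠ V) : U ∩ V ⊆ {a} := by
  intro x hx
  rw [mem_inter] at hx
  by_contra hxa
  have pair_eq : ∀ W : Finset α, #W = 2 → a ∈ W → x ∈ W → {a, x} = W := fun W hW haW hxW =>
    eq_of_subset_of_card_le (insert_subset haW (singleton_subset_iff.2 hxW))
      (by rw [hW, card_pair (Ne.symm (mem_singleton.not.1 hxa))])
  exact hUV ((pair_eq U hU haU hx.1).symm.trans (pair_eq V hV haV hx.2))

theorem pairwise_inter_subset_of_disjoint {U V : Finset α} (hUV : Disjoint U V) (W : Finset α)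
    (s : α) :
    (({U, V, W} : Finset (Finset α)) \ {W} : Set (Finset α)).Pairwise fun X Y => X ∩ Y ⊆ {s} := by
  refine (Set.pairwise_pair (a := U) (b := V).2 fun _ => ⟨?_, ?_⟩).mono fun X hX => ?_
  · simp [disjoint_iff_inter_eq_empty.1 hUV]
  · simp [disjoint_iff_inter_eq_empty.1 hUV.symm]
  · simp only [coe_insert, coe_singleton, Set.mem_sdiff, Set.mem_insert_iff,
      Set.mem_singleton_iff] at hX ⊢
    tauto

/-- Three distinct `2`-sets form a triangle (first case), or two of them are disjoint or all
three share a point (second case). -/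
theorem exists_forall_notMem_or_pairwise_inter_subset [Fintype α] (hα : 3 < Fintype.card α)
    {R : Finset (Finset α)} (hR : #R = 3) (hR2 : ∀ U ∈ R, #U = 2) :
    (∃ v, ∀ U ∈ R, v ∉ U) ∨
      ∃ s T, s ∈ T ∧ (↑R \ {T} : Set (Finset α)).Pairwise fun U V => U ∩ V ⊆ {s} := by
  obtain ⟨U₁, U₂, U₃, -, -, -, rfl⟩ := card_eq_three.1 hR
  simp only [mem_insert, mem_singleton, forall_eq_or_imp, forall_eq] at hR2
  obtain ⟨hU₁, hU₂, hU₃⟩ := hR2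
  have flag_of_disjoint : ∀ {U V W}, Disjoint U V → #W = 2 →
      ∃ s T, s ∈ T ∧ (({U, V, W} : Finset (Finset α)) \ {T} : Set (Finset α)).Pairwise
        fun X Y => X ∩ Y ⊆ {s} := fun {_ _ W} hUV hW => by
    obtain ⟨s, hs⟩ := card_pos.1 (show 0 < #W by omega)
    exact ⟨s, _, hs, pairwise_inter_subset_of_disjoint hUV _ s⟩
  by_cases d₁₂ : Disjoint U₁ U₂
  · exact Or.inr (flag_of_disjoint d₁₂ hU₃)
  by_cases d₁₃ : Disjoint U₁ U₃
  · rw [pair_comm]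
    exact Or.inr (flag_of_disjoint d₁₃ hU₂)
  by_cases d₂₃ : Disjoint U₂ U₃
  · rw [insert_comm, pair_comm U₁]
    exact Or.inr (flag_of_disjoint d₂₃ hU₁)
  by_cases hstar : ∃ a, a ∈ U₁ ∧ a ∈ U₂ ∧ a ∈ U₃
  · obtain ⟨a, ha₁, ha₂, ha₃⟩ := hstar
    refine Or.inr ⟨a, U₁, ha₁, fun X hX Y hY hXY => ?_⟩
    simp only [coe_insert, coe_singleton, Set.mem_sdiff, Set.mem_insert_iff,
      Set.mem_singleton_iff] at hX hY
    obtain ⟨hX2, haX⟩ : #X = 2 ∧ a ∈ X := by rcases hX.1 with rfl | rfl | rfl <;> tauto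
    obtain ⟨hY2, haY⟩ : #Y = 2 ∧ a ∈ Y := by rcases hY.1 with rfl | rfl | rfl <;> tauto
    exact inter_subset_singleton_of_card_eq_two hX2 hY2 haX haY hXY
  left
  obtain ⟨x, hx₁, hx₃⟩ := not_disjoint_iff.1 d₁₃
  obtain ⟨y, hy₂, hy₃⟩ := not_disjoint_iff.1 d₂₃
  have hxy : x ≠ y := by
    rintro rfl
    exact hstar ⟨x, hx₁, hy₂, hx₃⟩
  have h₃ : U₃ ⊆ U₁ ∪ U₂ := by
    rw [← eq_of_subset_of_card_le (insert_subset hx₃ (singleton_subset_iff.2 hy₃))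
      (by rw [card_pair hxy, hU₃])]
    exact insert_subset (mem_union_left _ hx₁) (singleton_subset_iff.2 (mem_union_right _ hy₂))
  have hcard : #(U₁ ∪ U₂) < #(univ : Finset α) := by
    have := card_union_add_card_inter U₁ U₂
    have := (not_disjoint_iff_nonempty_inter.1 d₁₂).card_pos
    rw [card_univ]
    omega
  obtain ⟨v, -, hv⟩ := exists_mem_notMem_of_card_lt_card hcard
  refine ⟨v, fun U hU hvU => hv ?_⟩
  simp only [mem_insert, mem_singleton] at hU
  rcases hU with rfl | rfl | rfl
  exacts [mem_union_left _ hvU, mem_union_right _ hvU, h₃ hvU]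

end TwoSets

/-- For pairwise distinct `2`-element subsets `S₁, S₂, S₃` of `[4]`, there is a
`2`-coloring of `B₄ - {S₁, S₂, S₃, [4]}` with no copy of `V_{1,1}` in color `0`
and no copy of `V_{2,2}` in color `1`. -/
theorem nonRamsey_B4_three_middle (S₁ S₂ S₃ : Finset (Fin 4))
    (h12 : S₁ ≠ S₂) (h13 : S₁ ≠ S₃) (h23 : S₂ ≠ S₃)
    (h1 : S₁.card = 2) (h2 : S₂.card = 2) (h3 : S₃.card = 2) :
    ∃ c : Finset (Fin 4) → Fin 2,
      ¬VCopyColoredIn 1 1 {X | X ≠ S₁ ∧ X ≠ S₂ ∧ X ≠ S₃ ∧ X ≠ Finset.univ} c 0 ∧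
      ¬VCopyColoredIn 2 2 {X | X ≠ S₁ ∧ X ≠ S₂ ∧ X ≠ S₃ ∧ X ≠ Finset.univ} c 1 := by
  set F : Set (Finset (Fin 4)) := {X | X ≠ S₁ ∧ X ≠ S₂ ∧ X ≠ S₃ ∧ X ≠ univ}
  have huniv : univ ∉ F := fun h => h.2.2.2 rfl
  set R := powersetCard 2 univ \ {S₁, S₂, S₃}
  have hR : ∀ X ∈ F, #X = 2 → X ∈ R := fun X hX hX2 => by
    simp [R, mem_powersetCard, hX2, hX.1, hX.2.1, hX.2.2.1]
  have hRcard : #R = 3 := by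
    rw [card_sdiff_of_subset (by simp [insert_subset_iff, h1, h2, h3]), card_powersetCard,
      card_eq_three.2 ⟨S₁, S₂, S₃, h12, h13, h23, rfl⟩]
    rfl
  rcases exists_forall_notMem_or_pairwise_inter_subset (by simp) hRcard
    (fun U hU => (mem_powersetCard.1 (mem_sdiff.1 hU).1).2) with ⟨v, hv⟩ | ⟨s, T, hsT, hRT⟩
  · exact ⟨facetColoring v, not_vCopyColoredIn_one_one_facetColoring huniv
      (fun X hX hX2 => hv X (hR X hX hX2)), not_vCopyColoredIn_two_two_facetColoring F v⟩
  · refine ⟨flagColoring s T, not_vCopyColoredIn_one_one_flagColoring (hRT.mono ?_),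
      not_vCopyColoredIn_two_two_flagColoring huniv hsT⟩
    rintro U ⟨⟨hU, hU2⟩, hUT⟩
    exact ⟨hR U hU hU2, hUT⟩
end

section
/- Let $\mathbf{P}$ be a finite poset with at least $2$ elements, let $d = \dim_2(\mathbf{P})$ be the least integer $N$ such that there is an embedding of $\mathbf{P}$ into the subsets of $[N]$ (an injection $\phi$ with $x \le y$ in $\mathbf{P}$ if and only if $\phi(x) \subseteq \phi(y)$), and let $m(\mathbf{P}) \in \{0,1,2\}$ be the number of extremal elements of $\mathbf{P}$ (an element $x$ with $x \le z$ for all $z \in \mathbf{P}$ counts once, and an element $y$ with $z \le y$ for all $z \in \mathbf{P}$ counts once). Then for $n = d + m(\mathbf{P})$, every coloring of the subsets of $[n]$ (with an arbitrary set of colors) contains either a monochromatic copy of $\mathbf{P}$ or a rainbow copy of $\mathbf{A}_2$, i.e. two subsets $X, Y$ with $X \not\subseteq Y$, $Y \not\subseteq X$, and different colors. (Hence $RR(\mathbf{P},\mathbf{A}_2) \le \dim_2(\mathbf{P}) + m(\mathbf{P})$.) -/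
/-! If no two incomparable sets have different colors, then all sets other than `∅` and `[n]`
share one color: a set `X ∋ a` with `X ≠ [n]` is incomparable with `[n] \ {a}`, and these
co-singletons are pairwise incomparable. So it suffices to embed `P` into `𝐁ₙ` avoiding `∅` and
`[n]`. In an embedding into `𝐁_d` only a bottom element of `P` can go to `∅` and only a top
element to `[d]`; so add one new coordinate lying in every image if `P` has a bottom, and one
lying in none if `P` has a top. -/

open Finset

section Coloring

variable {ι α : Type*} [Fintype ι] [DecidableEq ι] {c : Finset ι → α}

theorem apply_eq_apply_compl_singleton (hc : ∀ X Y : Finset ι, ¬X ⊆ Y → ¬Y ⊆ X → c X = c Y)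
    {X : Finset ι} {a : ι} (ha : a ∈ X) (hX : X ≠ univ) : c X = c {a}ᶜ := by
  refine hc _ _ (fun h => by simpa using h ha) fun h => hX (eq_univ_of_forall fun b => ?_)
  by_cases hb : b = a
  · exact hb ▸ ha
  · exact h (by simpa using hb)

theorem apply_eq_apply_of_forall_incomparable
    (hc : ∀ X Y : Finset ι, ¬X ⊆ Y → ¬Y ⊆ X → c X = c Y) {X Y : Finset ι}
    (hX : X.Nonempty) (hXu : X ≠ univ) (hY : Y.Nonempty) (hYu : Y ≠ univ) : c X = c Y := by
  obtain ⟨a, ha⟩ := hX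
  obtain ⟨b, hb⟩ := hY
  rw [apply_eq_apply_compl_singleton hc ha hXu, apply_eq_apply_compl_singleton hc hb hYu]
  obtain rfl | hab := eq_or_ne a b
  · rfl
  · exact apply_eq_apply_compl_singleton hc (by simp [hab.symm])
      (by simp [eq_univ_iff_forall])

end Coloring

theorem OrderEmbedding.isBot_of_isBot_apply {α β : Type*} [Preorder α] [Preorder β]
    (f : α ↪o β) {x : α} (h : IsBot (f x)) : IsBot x :=
  fun z => f.le_iff_le.1 (h (f z))

theorem OrderEmbedding.isTop_of_isTop_apply {α β : Type*} [Preorder α] [Preorder β]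
    (f : α ↪o β) {x : α} (h : IsTop (f x)) : IsTop x :=
  fun z => f.le_iff_le.1 (h (f z))

namespace Finset

def disjSumRightOrderEmbedding {ι κ : Type*} (t : Finset κ) : Finset ι ↪o Finset (ι ⊕ κ) :=
  OrderEmbedding.ofMapLEIff (fun s => s.disjSum t) fun s s' => by
    simp [disjSum_subset]

theorem disjSum_nonempty {ι κ : Type*} {s : Finset ι} {t : Finset κ} :
    (s.disjSum t).Nonempty ↔ s.Nonempty ∨ t.Nonempty := by
  simp only [nonempty_iff_ne_empty, ne_eq, disjSum_eq_empty, not_and_or]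

theorem disjSum_eq_univ {ι κ : Type*} [Fintype ι] [Fintype κ] {s : Finset ι} {t : Finset κ} :
    s.disjSum t = univ ↔ s = univ ∧ t = univ := by
  rw [← univ_disjSum_univ, disjSum_inj]

theorem map_equiv_eq_univ {ι κ : Type*} [Fintype ι] [Fintype κ] (e : ι ≃ κ) {s : Finset ι} :
    s.map e.toEmbedding = univ ↔ s = univ := by
  rw [← map_univ_equiv e, map_inj]

end Finset

theorem exists_orderEmbedding_nonempty_ne_univ {P : Type*} [PartialOrder P] {d a b : ℕ}
    (f : P ↪o Finset (Fin d))
    (ha : (∃ x : P, IsBot x) → a ≠ 0) (hb : (∃ x : P, IsTop x) → b ≠ 0) :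
    ∃ g : P ↪o Finset (Fin (d + (a + b))), ∀ x, (g x).Nonempty ∧ g x ≠ univ := by
  let t : Finset (Fin a ⊕ Fin b) := univ.disjSum ∅
  let e : Fin d ⊕ (Fin a ⊕ Fin b) ≃ Fin (d + (a + b)) :=
    (Equiv.sumCongr (Equiv.refl _) finSumFinEquiv).trans finSumFinEquiv
  refine ⟨(f.trans (disjSumRightOrderEmbedding t)).trans (mapEmbedding e.toEmbedding),
    fun x => ⟨?_, ?_⟩⟩
  · change (((f x).disjSum t).map e.toEmbedding).Nonempty
    rw [map_nonempty, disjSum_nonempty]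
    by_cases hbot : ∃ x : P, IsBot x
    · exact Or.inr ⟨.inl ⟨0, Nat.pos_of_ne_zero (ha hbot)⟩, by simp [t]⟩
    · exact Or.inl <| nonempty_iff_ne_empty.2 fun hx =>
        hbot ⟨x, f.isBot_of_isBot_apply (hx ▸ empty_subset)⟩
  · change ((f x).disjSum t).map e.toEmbedding ≠ univ
    rw [Ne, map_equiv_eq_univ, disjSum_eq_univ, disjSum_eq_univ]
    rintro ⟨hfx, -, hempty⟩
    have htop : IsTop x := f.isTop_of_isTop_apply (hfx ▸ subset_univ)
    obtain ⟨i⟩ : Nonempty (Fin b) := ⟨⟨0, Nat.pos_of_ne_zero (hb ⟨x, htop⟩)⟩⟩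
    exact notMem_empty i (hempty ▸ mem_univ i)

open Classical in
theorem RR_P_A2_upper_general (P : Type*) [PartialOrder P] [Fintype P] (d mP : ℕ)
    (hd : IsLeast {N | ∃ φ : P → Finset (Fin N),
      Function.Injective φ ∧ ∀ x y : P, x ≤ y ↔ φ x ⊆ φ y} d)
    (hm : mP = (if ∃ x : P, ∀ z : P, x ≤ z then 1 else 0) +
               (if ∃ y : P, ∀ z : P, z ≤ y then 1 else 0))
    {α : Type*} (c : Finset (Fin (d + mP)) → α) :
    (∃ φ : P → Finset (Fin (d + mP)), Function.Injective φ ∧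
        (∀ x y : P, x ≤ y ↔ φ x ⊆ φ y) ∧ ∃ col, ∀ x : P, c (φ x) = col) ∨
    (∃ X Y : Finset (Fin (d + mP)), ¬X ⊆ Y ∧ ¬Y ⊆ X ∧ c X ≠ c Y) := by
  refine or_iff_not_imp_right.2 fun hrainbow => ?_
  push Not at hrainbow
  obtain ⟨φ, -, hφ⟩ := hd.1
  subst hm
  obtain ⟨g, hg⟩ := exists_orderEmbedding_nonempty_ne_univ
    (OrderEmbedding.ofMapLEIff φ fun x y => (hφ x y).symm)
    (fun hbot => (if_pos hbot).trans_ne one_ne_zero)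
    (fun htop => (if_pos htop).trans_ne one_ne_zero)
  refine ⟨g, g.injective, fun x y => g.le_iff_le.symm, ?_⟩
  rcases isEmpty_or_nonempty P with _ | ⟨⟨x₀⟩⟩
  · exact ⟨c ∅, isEmptyElim⟩
  · exact ⟨c (g x₀), fun x => apply_eq_apply_of_forall_incomparable hrainbow
      (hg x).1 (hg x).2 (hg x₀).1 (hg x₀).2⟩

open Classical in
/-- For a finite poset `P` with at least two elements, with `d = dim₂(P)` and `mP`
its number of extremal elements, every coloring of the subsets of `[d + mP]`
contains a monochromatic copy of `P` or a rainbow copy of `A₂` (two incomparable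
subsets of different colors).  Hence `RR(P, A₂) ≤ dim₂(P) + m(P)`. -/
theorem RR_P_A2_upper (P : Type*) [PartialOrder P] [Fintype P]
    (hcard : 2 ≤ Fintype.card P) (d mP : ℕ)
    (hd : IsLeast {N | ∃ φ : P → Finset (Fin N),
      Function.Injective φ ∧ ∀ x y : P, x ≤ y ↔ φ x ⊆ φ y} d)
    (hm : mP = (if ∃ x : P, ∀ z : P, x ≤ z then 1 else 0) +
               (if ∃ y : P, ∀ z : P, z ≤ y then 1 else 0))
    {α : Type*} (c : Finset (Fin (d + mP)) → α) :
    (∃ φ : P → Finset (Fin (d + mP)), Function.Injective φ ∧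
        (∀ x y : P, x ≤ y ↔ φ x ⊆ φ y) ∧ ∃ col, ∀ x : P, c (φ x) = col) ∨
    (∃ X Y : Finset (Fin (d + mP)), ¬X ⊆ Y ∧ ¬Y ⊆ X ∧ c X ≠ c Y) :=
  RR_P_A2_upper_general P d mP hd hm c
end

section
/- Let $\mathbf{P}$ be a finite poset with at least $2$ elements, let $d = \dim_2(\mathbf{P})$ be the least integer $N$ such that there is an embedding of $\mathbf{P}$ into the subsets of $[N]$ (an injection $\phi$ with $x \le y$ in $\mathbf{P}$ if and only if $\phi(x) \subseteq \phi(y)$), and let $m(\mathbf{P}) \in \{0,1,2\}$ be the number of extremal elements of $\mathbf{P}$ (an element $x$ with $x \le z$ for all $z \in \mathbf{P}$ counts once, and an element $y$ with $z \le y$ for all $z \in \mathbf{P}$ counts once). Then for $n = d + m(\mathbf{P})$, there exists a coloring of the subsets of $[n-1]$ with three colors containing no monochromatic copy of $\mathbf{P}$ and no two incomparable subsets of different colors. Explicitly: color $\varnothing$ with color $1$, color $[n-1]$ with color $2$, and color all other subsets with color $3$. (Hence $RR(\mathbf{P},\mathbf{A}_2) \ge \dim_2(\mathbf{P}) + m(\mathbf{P})$,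 and combined with the upper bound, $RR(\mathbf{P},\mathbf{A}_2) = \dim_2(\mathbf{P}) + m(\mathbf{P})$.) -/
/-!
Color `∅`, the full set `[n-1]` and all remaining subsets with three different colors. Two
incomparable sets are both proper and nonempty, so they share the third color. A monochromatic
copy `φ` of `P` must use the third color too, since the first two color one set each and
`|P| ≥ 2`; so every `φ z` is proper and nonempty. Removing the common part `I` of all `φ z` and
restricting to a ground set `S` containing all of them still embeds `P` into the subsets of
`S \ I`; taking `I = φ(min P)` if `P` has a minimum and `S = φ(max P)` if `P` has a maximum saves
one point for each extremal element, so `dim₂(P) ≤ (n - 1) - m(P) < dim₂(P)` for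
`n = dim₂(P) + m(P)`.
-/

open Finset Function

namespace OrderEmbedding

variable {P α : Type*} [PartialOrder P]

def sdiffFinset [DecidableEq α] (φ : P ↪o Finset α) (I : Finset α) (hI : ∀ z, I ⊆ φ z) :
    P ↪o Finset α :=
  ofMapLEIff (fun z => φ z \ I) fun x y => by
    refine ⟨fun h => ?_, fun h => sdiff_subset_sdiff (φ.monotone h) le_rfl⟩
    rw [← φ.le_iff_le, ← sdiff_union_of_subset (hI x), ← sdiff_union_of_subset (hI y)]
    exact union_subset_union h le_rfl

def restrictFinset [DecidableEq α] (φ : P ↪o Finset α) (T : Finset α) (hT : ∀ z, φ z ⊆ T) :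
    P ↪o Finset T :=
  ofMapLEIff (fun z => (φ z).subtype (· ∈ T)) fun x y => by
    rw [← φ.le_iff_le, ← map_subset_map (f := Embedding.subtype (· ∈ T)),
      subtype_map_of_mem (hT x), subtype_map_of_mem (hT y)]

theorem nonempty_fin_card_sdiff [DecidableEq α] (φ : P ↪o Finset α) {I S : Finset α}
    (hI : ∀ z, I ⊆ φ z) (hS : ∀ z, φ z ⊆ S) : Nonempty (P ↪o Finset (Fin #(S \ I))) :=
  ⟨((φ.sdiffFinset I hI).restrictFinset (S \ I) fun z => sdiff_subset_sdiff (hS z) le_rfl).trans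
    (mapEmbedding (S \ I).equivFin.toEmbedding)⟩

end OrderEmbedding

section Extremal

variable {P α : Type*} [PartialOrder P]

theorem exists_subset_forall_le_card [Decidable (∃ x : P, ∀ z, x ≤ z)] {φ : P → Finset α}
    (hφ : Monotone φ) (hne : ∀ z, φ z ≠ ∅) :
    ∃ I, (∀ z, I ⊆ φ z) ∧ (if ∃ x : P, ∀ z, x ≤ z then 1 else 0) ≤ #I := by
  split_ifs with hbot
  · obtain ⟨x, hx⟩ := hbot
    exact ⟨φ x, fun z => hφ (hx z), card_pos.2 (nonempty_iff_ne_empty.2 (hne x))⟩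
  · exact ⟨∅, fun _ => empty_subset _, le_rfl⟩

theorem exists_superset_forall_card_add_le [Fintype α] [Decidable (∃ y : P, ∀ z, z ≤ y)]
    {φ : P → Finset α} (hφ : Monotone φ) (hnu : ∀ z, φ z ≠ univ) :
    ∃ S, (∀ z, φ z ⊆ S) ∧ #S + (if ∃ y : P, ∀ z, z ≤ y then 1 else 0) ≤ Fintype.card α := by
  split_ifs with htop
  · obtain ⟨y, hy⟩ := htop
    exact ⟨φ y, fun z => hφ (hy z), (card_lt_iff_ne_univ _).2 (hnu y)⟩
  · exact ⟨univ, fun _ => subset_univ _, by simp⟩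

theorem exists_orderEmbedding_fin_add_extremal_le [Nonempty P] [Fintype α] [DecidableEq α]
    [Decidable (∃ x : P, ∀ z, x ≤ z)] [Decidable (∃ y : P, ∀ z, z ≤ y)] (φ : P ↪o Finset α)
    (hne : ∀ z, φ z ≠ ∅) (hnu : ∀ z, φ z ≠ univ) :
    ∃ k, Nonempty (P ↪o Finset (Fin k)) ∧
      k + ((if ∃ x : P, ∀ z, x ≤ z then 1 else 0) + (if ∃ y : P, ∀ z, z ≤ y then 1 else 0)) ≤
        Fintype.card α := by
  obtain ⟨I, hI, hIcard⟩ := exists_subset_forall_le_card φ.monotone hne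
  obtain ⟨S, hS, hScard⟩ := exists_superset_forall_card_add_le φ.monotone hnu
  obtain ⟨z⟩ := ‹Nonempty P›
  refine ⟨#(S \ I), φ.nonempty_fin_card_sdiff hI hS, ?_⟩
  rw [card_sdiff_of_subset ((hI z).trans (hS z))]
  have := card_le_card ((hI z).trans (hS z))
  omega

end Extremal

section Coloring

variable {α : Type*} [Fintype α] [DecidableEq α]

def extremeColoring (X : Finset α) : Fin 3 :=
  if X = ∅ then 0 else if X = univ then 1 else 2

theorem eq_empty_of_extremeColoring_eq {X : Finset α}
    (h : extremeColoring X = extremeColoring (∅ : Finset α)) : X = ∅ := by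
  unfold extremeColoring at h
  split_ifs at h <;> simp_all

theorem eq_univ_of_extremeColoring_eq {X : Finset α}
    (h : extremeColoring X = extremeColoring (univ : Finset α)) : X = univ := by
  unfold extremeColoring at h
  split_ifs at h <;> simp_all

theorem extremeColoring_eq_of_not_subset {X Y : Finset α} (hXY : ¬X ⊆ Y) (hYX : ¬Y ⊆ X) :
    extremeColoring X = extremeColoring Y := by
  have hX : X ≠ ∅ ∧ X ≠ univ := ⟨by rintro rfl; simp at hXY, by rintro rfl; simp at hYX⟩
  have hY : Y ≠ ∅ ∧ Y ≠ univ := ⟨by rintro rfl; simp at hYX, by rintro rfl; simp at hXY⟩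
  simp only [extremeColoring, hX, hY, if_false]

end Coloring

theorem Function.Injective.apply_ne_of_color_isolated {P β γ : Type*} [Nontrivial P]
    {φ : P → β} (hφ : Injective φ) {c : β → γ} {col : γ} (hcol : ∀ x, c (φ x) = col) {X : β}
    (hX : ∀ Y, c Y = c X → Y = X) (z : P) : φ z ≠ X := by
  rintro rfl
  obtain ⟨w, hw⟩ := exists_ne z
  exact hw (hφ (hX _ ((hcol w).trans (hcol z).symm)))

open Classical in
/-- For a finite poset `P` with at least two elements, with `d = dim₂(P)` and `mP`
its number of extremal elements, there is a `3`-coloring of the subsets of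
`[d + mP - 1]` with no monochromatic copy of `P` and no two incomparable subsets of
different colors.  Hence `RR(P, A₂) ≥ dim₂(P) + m(P)`. -/
theorem RR_P_A2_lower (P : Type*) [PartialOrder P] [Fintype P]
    (hcard : 2 ≤ Fintype.card P) (d mP : ℕ)
    (hd : IsLeast {N | ∃ φ : P → Finset (Fin N),
      Function.Injective φ ∧ ∀ x y : P, x ≤ y ↔ φ x ⊆ φ y} d)
    (hm : mP = (if ∃ x : P, ∀ z : P, x ≤ z then 1 else 0) +
               (if ∃ y : P, ∀ z : P, z ≤ y then 1 else 0)) :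
    ∃ c : Finset (Fin (d + mP - 1)) → Fin 3,
      (¬∃ φ : P → Finset (Fin (d + mP - 1)), Function.Injective φ ∧
          (∀ x y : P, x ≤ y ↔ φ x ⊆ φ y) ∧ ∃ col, ∀ x : P, c (φ x) = col) ∧
      (∀ X Y : Finset (Fin (d + mP - 1)), ¬X ⊆ Y → ¬Y ⊆ X → c X = c Y) := by
  have : Nontrivial P := Fintype.one_lt_card_iff_nontrivial.1 hcard
  -- `d + mP - 1` is truncated subtraction, so the final count needs `d ≠ 0`.
  have hd_pos : d ≠ 0 := by
    rintro rfl
    obtain ⟨φ, hφ, -⟩ := hd.1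
    exact not_subsingleton P hφ.subsingleton
  refine ⟨extremeColoring, ?_, fun X Y => extremeColoring_eq_of_not_subset⟩
  rintro ⟨φ, hφ, hord, col, hcol⟩
  obtain ⟨k, ⟨ψ⟩, hk⟩ := exists_orderEmbedding_fin_add_extremal_le
    (OrderEmbedding.ofMapLEIff φ fun x y => (hord x y).symm)
    (hφ.apply_ne_of_color_isolated hcol fun _ => eq_empty_of_extremeColoring_eq)
    (hφ.apply_ne_of_color_isolated hcol fun _ => eq_univ_of_extremeColoring_eq)
  have hdk : d ≤ k := hd.2 ⟨ψ, ψ.injective, fun x y => ψ.le_iff_le.symm⟩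
  rw [Fintype.card_fin, ← hm] at hk
  omega
end

section
/- There exists a coloring of the subsets of $[3]$ with two colors under which there is no monochromatic weak copy of $\mathbf{V}_{1,2}$, i.e. no four distinct subsets $X, Y, Z_1, Z_2$ of $[3]$ with $X \subsetneq Y$, $X \subsetneq Z_1 \subsetneq Z_2$ all of the same color. (Combined with the upper bound, the weak Boolean Ramsey number satisfies $R_w(\mathbf{V}_{1,2},\mathbf{V}_{1,2}) = 4$.) -/
/-! Colour a set by whether it has at most one element. Each colour class then meets only two
consecutive levels of `𝐁₃` (levels `0, 1` and levels `2, 3`), whereas the chain `X ⊊ Z₁ ⊊ Z₂`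
inside a copy of `V_{1,2}` meets three distinct levels. -/

variable {α : Type*}

theorem Finset.card_add_two_le_of_ssubset_of_ssubset {X Y Z : Finset α} (hXY : X ⊂ Y)
    (hYZ : Y ⊂ Z) : X.card + 2 ≤ Z.card := by
  have := Finset.card_lt_card hXY
  have := Finset.card_lt_card hYZ
  omega

def lowHighColoring (S : Finset α) : Fin 2 := if S.card ≤ 1 then 0 else 1

theorem not_lowHighColoring_chain_monochromatic [Fintype α] (hα : Fintype.card α ≤ 3)
    {X Y Z : Finset α} (hXY : X ⊂ Y) (hYZ : Y ⊂ Z) :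
    ¬(lowHighColoring Y = lowHighColoring X ∧ lowHighColoring Z = lowHighColoring X) := by
  have hchain := Finset.card_add_two_le_of_ssubset_of_ssubset hXY hYZ
  have hZ : Z.card ≤ 3 := (Finset.card_le_univ Z).trans hα
  unfold lowHighColoring
  split_ifs <;> simp <;> omega

/-- There is a `2`-coloring of the subsets of `[3]` with no monochromatic weak copy
of `V_{1,2}`: no four distinct subsets `X ⊊ Y`, `X ⊊ Z₁ ⊊ Z₂` of the same color.
Hence `R_w(V_{1,2}, V_{1,2}) = 4`. -/
theorem Rw_V12_lower :
    ∃ c : Finset (Fin 3) → Fin 2,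
      ¬∃ X Y Z₁ Z₂ : Finset (Fin 3),
        Y ≠ Z₁ ∧ Y ≠ Z₂ ∧ X ⊂ Y ∧ X ⊂ Z₁ ∧ Z₁ ⊂ Z₂ ∧
        c Y = c X ∧ c Z₁ = c X ∧ c Z₂ = c X := by
  refine ⟨lowHighColoring, ?_⟩
  rintro ⟨X, Y, Z₁, Z₂, -, -, -, hXZ₁, hZ₁Z₂, -, hZ₁, hZ₂⟩
  exact not_lowHighColoring_chain_monochromatic (by simp) hXZ₁ hZ₁Z₂ ⟨hZ₁, hZ₂⟩
end
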